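/- arXiv:1311.7094 — 12 statements merged into one kernel-verified Lean document; each statement's English description precedes it below -/
import Mathlib

section
/- Let t > 1 and let a₀(t) = (2^{t²−1} + 2^{t²−t}) / (2^{t−1} − 1)^{2t−1}. If a > a₀(t), then the kernel K_{t,a}(x, y) = (1/π) · 1/(1 + (x − y)² + a(x² + y²)^t) is not a positive-definite kernel on ℝ × ℝ; that is, there exist n ∈ ℕ, points x₁, …, xₙ ∈ ℝ, and complex numbers c₁, …, cₙ such that ∑_{j=1}^n ∑_{k=1}^n c_j · conj(c_k) · K_{t,a}(x_j, x_k) is not a nonnegative real number. -/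
open Finset ComplexOrder

/-- For `t > 1` and `a > a₀(t) = (2^{t²−1} + 2^{t²−t}) / (2^{t−1} − 1)^{2t−1}`,
the kernel `K_{t,a}` is not positive-definite on `ℝ × ℝ`. -/
theorem stmt2 (t a : ℝ) (ht : 1 < t)
    (ha : ((2 : ℝ) ^ (t ^ 2 - 1) + 2 ^ (t ^ 2 - t)) / ((2 : ℝ) ^ (t - 1) - 1) ^ (2 * t - 1) < a) :
    ∃ (n : ℕ) (x : Fin n → ℝ) (c : Fin n → ℂ),
      ¬ (0 ≤ ∑ j, ∑ k, c j * (starRingEnd ℂ) (c k) *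
        (((1 / Real.pi) * (1 + (x j - x k) ^ 2 + a * ((x j) ^ 2 + (x k) ^ 2) ^ t) ⁻¹ : ℝ) : ℂ)) := by
  have ht0 : (0:ℝ) < t := by linarith
  have ht1 : (0:ℝ) < t - 1 := by linarith
  set P : ℝ := 2 ^ (t - 1) with hPdef
  have hP1 : 1 < P := by
    rw [hPdef]
    exact Real.one_lt_rpow_iff_of_pos (by norm_num) |>.mpr (Or.inl ⟨by norm_num, ht1⟩)
  have hP0 : 0 < P := by linarith
  set z : ℝ := P - 1 with hzdef
  have hz : 0 < z := by simp only [hzdef]; linarith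
  have h2t : (2:ℝ) ^ t = 2 * P := by
    rw [hPdef, show t = (t-1) + 1 by ring, Real.rpow_add (by norm_num), Real.rpow_one]
    ring
  set Q : ℝ := 2 ^ (t^2 - t) with hQdef
  have hQ0 : 0 < Q := Real.rpow_pos_of_pos (by norm_num) _
  have hQP : (2:ℝ) ^ (t^2 - 1) = Q * P := by
    rw [hQdef, hPdef, show t^2 - 1 = (t^2 - t) + (t - 1) by ring,
      Real.rpow_add (by norm_num)]
  set y₀ : ℝ := z^2 / (2*P) with hy₀def
  have hy₀0 : 0 < y₀ := by positivity
  set v : ℝ := z - y₀ with hvdef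
  have hv2 : v = z * (P + 1) / (2*P) := by
    simp only [hvdef, hy₀def, hzdef]
    field_simp
    ring
  have hv0 : 0 < v := by rw [hv2]; positivity
  set R : ℝ := z ^ (2*t) with hRdef
  have hR0 : 0 < R := Real.rpow_pos_of_pos hz _
  have hzt : z ^ (2*t - 1) = R / z := by
    rw [hRdef, Real.rpow_sub hz, Real.rpow_one]
  have hyt : y₀ ^ t = R / (2 * P * Q) := by
    rw [hy₀def, ← h2t, Real.div_rpow (by positivity) (by positivity),
      ← Real.rpow_natCast z 2, ← Real.rpow_mul hz.le,
      ← Real.rpow_mul (by norm_num : (0:ℝ) ≤ 2) t t,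
      show t*t = (t^2 - t) + t by ring, Real.rpow_add (by norm_num : (0:ℝ) < 2)]
    push_cast
    rw [hRdef, ← hQdef]
    ring
  -- a > a₀ = v / y₀^t
  have hyt0 : 0 < y₀ ^ t := Real.rpow_pos_of_pos hy₀0 _
  have ha₀v : ((2:ℝ) ^ (t^2 - 1) + Q) / z ^ (2*t - 1) * y₀ ^ t = v := by
    rw [hyt, hQP, hzt, hv2]
    field_simp
  have ha₀pos : 0 < ((2:ℝ) ^ (t^2 - 1) + Q) / z ^ (2*t - 1) := by
    apply div_pos (by positivity)
    rw [hzt]; positivity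
  have ha0 : 0 < a := lt_trans ha₀pos ha
  have hvy : v < a * y₀ ^ t := by
    calc v = _ * y₀ ^ t := ha₀v.symm
    _ < a * y₀ ^ t := by apply mul_lt_mul_of_pos_right ha hyt0
  set w : ℝ := (v / a) ^ (1/t) with hwdef
  have hw0 : 0 < w := Real.rpow_pos_of_pos (by positivity) _
  have hwt : a * w ^ t = v := by
    rw [hwdef, ← Real.rpow_mul (by positivity), one_div_mul_cancel (ne_of_gt ht0),
      Real.rpow_one]
    field_simp
  have hwy : w < y₀ := by
    have h1 : v / a < y₀ ^ t := (div_lt_iff₀ ha0).mpr (by linarith [hvy])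
    calc w < (y₀ ^ t) ^ (1/t) := Real.rpow_lt_rpow (by positivity) h1 (by positivity)
    _ = y₀ := by
        rw [← Real.rpow_mul hy₀0.le, mul_one_div, div_self (ne_of_gt ht0), Real.rpow_one]
  clear_value Q R
  -- key inequality
  have hy₀P : y₀ < 2 * P := by
    rw [hy₀def, div_lt_iff₀ (by positivity)]
    nlinarith [hz, hP1]
  have key : (1 + w + v) ^ 2 < 1 + 2 * P * v := by
    have hcon : 2*P*y₀ = (P-1)^2 := by
      rw [hy₀def, hzdef]
      field_simp
    have hid : 1 + 2*P*v - (1 + w + v)^2 = (y₀ - w) * (2*P - (y₀ - w)) := by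
      rw [hvdef, hzdef]
      linear_combination -hcon
    linarith [hid, mul_pos (sub_pos.mpr hwy) (show (0:ℝ) < 2*P - (y₀ - w) by linarith)]
  clear_value P z y₀ v w
  -- the two points and coefficients
  have hsq : (Real.sqrt w) ^ 2 = w := Real.sq_sqrt hw0.le
  have haw : a * (w + w) ^ t = 2 * P * v := by
    rw [show w + w = 2 * w by ring, Real.mul_rpow (by norm_num) hw0.le, h2t]
    linear_combination 2 * P * hwt
  have h0t : (0:ℝ) ^ t = 0 := Real.zero_rpow (ne_of_gt ht0)
  set d0 : ℝ := 1 + 2 * P * v with hd0def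
  set d1 : ℝ := 1 + w + v with hd1def
  have hd00 : 0 < d0 := by rw [hd0def]; positivity
  have hd10 : 0 < d1 := by rw [hd1def]; positivity
  have hkey : d1 ^ 2 < d0 := key
  set r1 : ℝ := -(d1 / d0) with hr1def
  refine ⟨2, ![Real.sqrt w, 0], ![1, (r1 : ℂ)], ?_⟩
  intro h
  rw [Fin.sum_univ_two, Fin.sum_univ_two, Fin.sum_univ_two] at h
  simp only [Matrix.cons_val_zero, Matrix.cons_val_one, Matrix.head_cons, map_one,
    Complex.conj_ofReal, one_mul, mul_one] at h
  have e00 : 1 + (Real.sqrt w - Real.sqrt w)^2 + a * ((Real.sqrt w)^2 + (Real.sqrt w)^2)^t = d0 := by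
    rw [sub_self, hsq, haw, hd0def]
    norm_num
  have e01 : 1 + (Real.sqrt w - 0)^2 + a * ((Real.sqrt w)^2 + (0:ℝ)^2)^t = d1 := by
    rw [sub_zero, hsq, hd1def]
    norm_num
    linarith [hwt]
  have e10 : 1 + ((0:ℝ) - Real.sqrt w)^2 + a * ((0:ℝ)^2 + (Real.sqrt w)^2)^t = d1 := by
    rw [zero_sub, neg_sq, hsq, hd1def]
    norm_num
    linarith [hwt]
  have e11 : 1 + ((0:ℝ) - 0)^2 + a * ((0:ℝ)^2 + (0:ℝ)^2)^t = 1 := by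
    rw [sub_self]
    norm_num [h0t]
  rw [e00, e01, e10, e11] at h
  set q : ℝ := 1/Real.pi with hqdef
  have hq0 : 0 < q := by rw [hqdef]; positivity
  have hrneg : q * d0⁻¹ + 2 * r1 * (q * d1⁻¹) + r1^2 * (q * 1⁻¹) < 0 := by
    have hval : q * d0⁻¹ + 2 * r1 * (q * d1⁻¹) + r1^2 * (q * 1⁻¹)
        = q * ((d1^2 - d0) / d0^2) := by
      rw [hr1def]
      field_simp
      ring
    rw [hval]
    exact mul_neg_of_pos_of_neg hq0
      (div_neg_of_neg_of_pos (by linarith) (by positivity))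
  have h2 : (0:ℂ) ≤ ((q * d0⁻¹ + 2 * r1 * (q * d1⁻¹) + r1^2 * (q * 1⁻¹) : ℝ) : ℂ) := by
    convert h using 1
    push_cast
    ring
  rw [Complex.zero_le_real] at h2
  linarith
end

section
/- Let t be a real number lying in the interval (2k − 1, 2k) for some positive integer k (i.e., t is not an integer and its integer part is odd), and let a > 0. Then the kernel K_{t,a}(x, y) = (1/π) · 1/(1 + (x − y)² + a(x² + y²)^t) is not a positive-definite kernel on ℝ × ℝ; that is, there exist n ∈ ℕ, points x₁, …, xₙ ∈ ℝ, and complex numbers c₁, …, cₙ such that ∑_{j=1}^n ∑_{k=1}^n c_j · conj(c_k) · K_{t,a}(x_j, x_k) is not a nonnegative real number. -/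
/-!
Put the weight `(-1)^(k-j) * choose k j` at both points `±√(j η)`, `0 ≤ j ≤ k`. By symmetry and
because `Δ^k` kills polynomials of degree `< k`, every moment of order `< 2k` of this signed
configuration vanishes. Writing `d = (x - y)²` and `v = a (x² + y²)^t`, one has
`(1 + d + v)⁻¹ = ∑_{r<2k} (-d)^r - v + O(η^{2k} + η^{t+1})`. The polynomial part is annihilated by
the vanishing moments, and `-v` contributes `-4 a η^t Δ^{2k}(u ↦ u^t)(0)`. This forward difference
is positive because the `(2k-1)`-st derivative of `u^t` is a positive multiple of the increasing
function `u^(t-2k+1)`, so the quadratic form is negative once `η` is small, as `t < 2k` and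
`t < t + 1`.
-/

open Finset ComplexOrder fwdDiff

section ForwardDifference

variable {f f' : ℝ → ℝ} {a h : ℝ}

lemma continuousOn_fwdDiff_iter (hh : 0 ≤ h) (hf : ContinuousOn f (Set.Ici a)) (n : ℕ) :
    ContinuousOn ((Δ_[h])^[n] f) (Set.Ici a) := by
  induction n with
  | zero => exact hf
  | succ n ih =>
    rw [Function.iterate_succ']
    refine (ih.comp (continuous_add_const h).continuousOn fun y hy => ?_).sub ih
    simp only [Set.mem_Ici] at hy ⊢
    linarith

lemma hasDerivAt_fwdDiff_iter (hh : 0 ≤ h) (hf : ∀ u ∈ Set.Ioi a, HasDerivAt f (f' u) u)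
    (n : ℕ) : ∀ u ∈ Set.Ioi a, HasDerivAt ((Δ_[h])^[n] f) ((Δ_[h])^[n] f' u) u := by
  induction n with
  | zero => exact hf
  | succ n ih =>
    intro u hu
    rw [Function.iterate_succ_apply', Function.iterate_succ']
    have hu' : u + h ∈ Set.Ioi a := by simp only [Set.mem_Ioi] at hu ⊢; linarith
    exact ((ih (u + h) hu').comp_add_const u h).sub (ih u hu)

lemma fwdDiff_iter_succ_pos (hh : 0 < h) (hf : ContinuousOn f (Set.Ici a))
    (hf' : ∀ u ∈ Set.Ioi a, HasDerivAt f (f' u) u) {n : ℕ}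
    (hpos : ∀ u ∈ Set.Ioi a, 0 < (Δ_[h])^[n] f' u) {x : ℝ} (hx : x ∈ Set.Ici a) :
    0 < (Δ_[h])^[n + 1] f x := by
  have hmono : StrictMonoOn ((Δ_[h])^[n] f) (Set.Ici a) := by
    refine strictMonoOn_of_deriv_pos (convex_Ici a) (continuousOn_fwdDiff_iter hh.le hf n)
      fun u hu => ?_
    rw [interior_Ici] at hu
    rw [(hasDerivAt_fwdDiff_iter hh.le hf' n u hu).deriv]
    exact hpos u hu
  rw [Function.iterate_succ_apply', fwdDiff, sub_pos]
  exact hmono hx (by simp only [Set.mem_Ici] at hx ⊢; linarith) (lt_add_of_pos_right x hh)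

lemma fwdDiff_iter_rpow_pos (hh : 0 < h) {n : ℕ} {s : ℝ} (hs : n < s) {x : ℝ} (hx : 0 ≤ x) :
    0 < (Δ_[h])^[n + 1] (fun u => u ^ s) x := by
  induction n generalizing s x with
  | zero =>
    rw [Function.iterate_one, fwdDiff, sub_pos]
    exact Real.rpow_lt_rpow hx (lt_add_of_pos_right x hh) (by simpa using hs)
  | succ n ih =>
    have hs' : (n : ℝ) < s - 1 := by push_cast at hs; linarith
    have hs₀ : 0 < s := by linarith [n.cast_nonneg (α := ℝ)]
    have hcont : ContinuousOn (fun u : ℝ => u ^ s) (Set.Ici 0) := fun u _ =>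
      (Real.continuousAt_rpow_const u s (Or.inr hs₀.le)).continuousWithinAt
    refine fwdDiff_iter_succ_pos hh hcont (f' := s • fun u => u ^ (s - 1))
      (fun u hu => Real.hasDerivAt_rpow_const (Or.inl (ne_of_gt hu))) (fun u hu => ?_) hx
    rw [fwdDiff_iter_const_smul, Pi.smul_apply, smul_eq_mul]
    exact mul_pos hs₀ (ih hs' hu.le)

end ForwardDifference

def binomWeight (k j : ℕ) : ℝ := (-1) ^ (k - j) * k.choose j

lemma fwdDiff_iter_eq_sum_binomWeight (f : ℝ → ℝ) (k : ℕ) (y : ℝ) :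
    (Δ_[1])^[k] f y = ∑ j : Fin (k + 1), binomWeight k j * f (y + j) := by
  rw [fwdDiff_iter_eq_sum_shift, ← Fin.sum_univ_eq_sum_range]
  simp [binomWeight]

lemma sum_sum_binomWeight_mul (f : ℝ → ℝ) (k : ℕ) :
    ∑ j : Fin (k + 1), ∑ l : Fin (k + 1), binomWeight k j * binomWeight k l * f (j + l) =
      (Δ_[1])^[2 * k] f 0 := by
  rw [two_mul, Function.iterate_add_apply, fwdDiff_iter_eq_sum_binomWeight]
  refine Finset.sum_congr rfl fun j _ => ?_
  rw [zero_add, fwdDiff_iter_eq_sum_binomWeight, Finset.mul_sum]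
  simp only [mul_assoc]

lemma sum_binomWeight_mul_pow_eq_zero {k α : ℕ} (hα : α < k) :
    ∑ j : Fin (k + 1), binomWeight k j * (j : ℝ) ^ α = 0 := by
  simpa [fwdDiff_iter_eq_sum_binomWeight] using
    congr_fun (fwdDiff_iter_pow_eq_zero_of_lt (R := ℝ) hα) 0

lemma sum_sum_mul_sub_pow_eq_zero {ι R : Type*} [Fintype ι] [CommRing R] {x c : ι → R}
    {N m : ℕ} (hmom : ∀ p < N, ∑ i, c i * x i ^ p = 0) (hm : m < 2 * N) :
    ∑ i, ∑ j, c i * c j * (x i - x j) ^ m = 0 := by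
  set A : ℕ → R := fun p => (-1) ^ (p + m) * m.choose p
  have hexpand : ∑ i, ∑ j, c i * c j * (x i - x j) ^ m =
      ∑ p ∈ range (m + 1), A p * ((∑ i, c i * x i ^ p) * ∑ j, c j * x j ^ (m - p)) :=
    calc ∑ i, ∑ j, c i * c j * (x i - x j) ^ m
        = ∑ i, ∑ j, ∑ p ∈ range (m + 1), A p * (c i * x i ^ p * (c j * x j ^ (m - p))) := by
          simp only [sub_pow, Finset.mul_sum, A]
          exact Finset.sum_congr rfl fun i _ => Finset.sum_congr rfl fun j _ =>
            Finset.sum_congr rfl fun p _ => by ring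
      _ = _ := by
          simp only [Finset.sum_mul, Finset.mul_sum]
          rw [Finset.sum_comm]
          exact (Finset.sum_congr rfl fun _ _ => Finset.sum_comm).trans Finset.sum_comm
  rw [hexpand]
  refine Finset.sum_eq_zero fun p hp => ?_
  rcases lt_or_ge p N with hpN | hpN
  · rw [hmom p hpN, zero_mul, mul_zero]
  · rw [hmom (m - p) (by omega), mul_zero, mul_zero]

lemma sum_sum_mul_geom_sum_eq_zero {ι : Type*} [Fintype ι] {x c : ι → ℝ} {N : ℕ}
    (hmom : ∀ p < N, ∑ i, c i * x i ^ p = 0) :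
    ∑ i, ∑ j, c i * c j * ∑ r ∈ range N, (-(x i - x j) ^ 2) ^ r = 0 := by
  have hterm : ∀ i j, c i * c j * ∑ r ∈ range N, (-(x i - x j) ^ 2) ^ r =
      ∑ r ∈ range N, (-1) ^ r * (c i * c j * (x i - x j) ^ (2 * r)) := by
    intro i j
    rw [Finset.mul_sum]
    refine Finset.sum_congr rfl fun r _ => ?_
    rw [neg_pow, pow_mul]
    ring
  simp_rw [hterm]
  rw [(Finset.sum_congr rfl fun _ _ => Finset.sum_comm).trans Finset.sum_comm]
  refine Finset.sum_eq_zero fun r hr => ?_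
  simp_rw [← Finset.mul_sum]
  rw [sum_sum_mul_sub_pow_eq_zero hmom (by simpa using Finset.mem_range.mp hr), mul_zero]

lemma abs_inv_one_add_sub_geom_sum_add_le {d v : ℝ} (hd : 0 ≤ d) (hv : 0 ≤ v) {N : ℕ}
    (hN : Even N) :
    |(1 + d + v)⁻¹ - ∑ r ∈ range N, (-d) ^ r + v| ≤ d ^ N + v * (d + v) * (2 + (d + v)) := by
  have hgeom : ∑ r ∈ range N, (-d) ^ r = (1 - d ^ N) / (1 + d) := by
    rw [eq_div_iff (by positivity)]
    linear_combination (-1 : ℝ) * geom_sum_mul (-d) N - hN.neg_pow d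
  have hsplit : (1 + d + v)⁻¹ - ∑ r ∈ range N, (-d) ^ r + v =
      d ^ N / (1 + d) + v * (d + (d + v) + d * (d + v)) / ((1 + d) * (1 + d + v)) := by
    rw [hgeom]
    field_simp
    ring
  rw [hsplit, abs_of_nonneg (by positivity)]
  gcongr ?_ + ?_
  · exact div_le_self (by positivity) (by linarith)
  · calc v * (d + (d + v) + d * (d + v)) / ((1 + d) * (1 + d + v))
        ≤ v * (d + (d + v) + d * (d + v)) :=
          div_le_self (by positivity) (one_le_mul_of_one_le_of_one_le (by linarith) (by linarith))
      _ ≤ v * (d + v) * (2 + (d + v)) := by nlinarith [mul_nonneg hv hd, mul_nonneg hv hv]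

noncomputable def kernelRemainder (t a : ℝ) (N : ℕ) (x y : ℝ) : ℝ :=
  (1 + (x - y) ^ 2 + a * (x ^ 2 + y ^ 2) ^ t)⁻¹ - ∑ r ∈ range N, (-(x - y) ^ 2) ^ r
    + a * (x ^ 2 + y ^ 2) ^ t

lemma exists_abs_kernelRemainder_le {t a R : ℝ} (ht : 1 ≤ t) (ha : 0 ≤ a) (hR : 0 ≤ R)
    {N : ℕ} (hN : Even N) :
    ∃ C, ∀ η ∈ Set.Ioc (0 : ℝ) 1, ∀ x y, x ^ 2 ≤ R * η → y ^ 2 ≤ R * η →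
      |kernelRemainder t a N x y| ≤ C * (η ^ N + η ^ (t + 1)) := by
  set V := a * (2 * R) ^ t
  set U := 4 * R + V
  have hV : 0 ≤ V := by positivity
  refine ⟨(4 * R) ^ N + V * U * (2 + U), fun η ⟨hη0, hη1⟩ x y hx hy => ?_⟩
  have hd : (x - y) ^ 2 ≤ 4 * R * η := by nlinarith [sq_nonneg (x + y)]
  have hv : a * (x ^ 2 + y ^ 2) ^ t ≤ V * η ^ t := by
    calc a * (x ^ 2 + y ^ 2) ^ t ≤ a * (2 * R * η) ^ t := by gcongr; linarith
      _ = V * η ^ t := by rw [Real.mul_rpow (by positivity) hη0.le, mul_assoc]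
  have hηt : η ^ t ≤ η := by
    simpa using Real.rpow_le_rpow_of_exponent_ge hη0 hη1 ht
  have hu : (x - y) ^ 2 + a * (x ^ 2 + y ^ 2) ^ t ≤ U * η := by
    nlinarith [mul_le_mul_of_nonneg_left hηt hV]
  have hU : U * η ≤ U := by nlinarith
  have hN1 : 0 ≤ V * U * (2 + U) * η ^ N := by positivity
  have hN2 : 0 ≤ (4 * R) ^ N * η ^ (t + 1) := by positivity
  calc |kernelRemainder t a N x y|
        ≤ ((x - y) ^ 2) ^ N + a * (x ^ 2 + y ^ 2) ^ t * ((x - y) ^ 2 + a * (x ^ 2 + y ^ 2) ^ t)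
          * (2 + ((x - y) ^ 2 + a * (x ^ 2 + y ^ 2) ^ t)) :=
        abs_inv_one_add_sub_geom_sum_add_le (sq_nonneg _) (by positivity) hN
    _ ≤ (4 * R * η) ^ N + V * η ^ t * (U * η) * (2 + U) := by
        gcongr
        exact hu.trans hU
    _ = (4 * R) ^ N * η ^ N + V * U * (2 + U) * η ^ (t + 1) := by
        rw [mul_pow, Real.rpow_add_one hη0.ne']
        ring
    _ ≤ ((4 * R) ^ N + V * U * (2 + U)) * (η ^ N + η ^ (t + 1)) := by linarith

noncomputable def symPoint (k : ℕ) (η : ℝ) : Fin (k + 1) ⊕ Fin (k + 1) → ℝ :=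
  Sum.elim (fun j => √(j * η)) (fun j => -√(j * η))

def symWeight (k : ℕ) : Fin (k + 1) ⊕ Fin (k + 1) → ℝ :=
  Sum.elim (fun j => binomWeight k j) (fun j => binomWeight k j)

section SymmetricConfiguration

variable {k : ℕ} {η : ℝ}

lemma sq_sqrt_cast_mul (hη : 0 ≤ η) (j : Fin (k + 1)) : √(j * η) ^ 2 = j * η :=
  Real.sq_sqrt (mul_nonneg j.val.cast_nonneg hη)

lemma symPoint_sq_le (hη : 0 ≤ η) (i : Fin (k + 1) ⊕ Fin (k + 1)) :
    symPoint k η i ^ 2 ≤ k * η := by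
  have hj : ∀ j : Fin (k + 1), (j : ℝ) * η ≤ k * η := fun j =>
    mul_le_mul_of_nonneg_right (by exact_mod_cast Nat.lt_succ_iff.mp j.isLt) hη
  rcases i with j | j
  · simpa only [symPoint, Sum.elim_inl, sq_sqrt_cast_mul hη] using hj j
  · simpa only [symPoint, Sum.elim_inr, neg_sq, sq_sqrt_cast_mul hη] using hj j

lemma sum_symWeight_mul_symPoint_pow (hη : 0 ≤ η) {p : ℕ} (hp : p < 2 * k) :
    ∑ i, symWeight k i * symPoint k η i ^ p = 0 := by
  rw [Fintype.sum_sum_type]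
  simp only [symWeight, symPoint, Sum.elim_inl, Sum.elim_inr]
  rcases Nat.even_or_odd p with ⟨α, rfl⟩ | hodd
  · have hpow : ∀ j : Fin (k + 1), √(j * η) ^ (α + α) = η ^ α * (j : ℝ) ^ α := fun j => by
      rw [← two_mul, pow_mul, sq_sqrt_cast_mul hη, mul_pow, mul_comm]
    simp only [Even.neg_pow ⟨α, rfl⟩, hpow, mul_left_comm _ (η ^ α), ← Finset.mul_sum,
      sum_binomWeight_mul_pow_eq_zero (show α < k by omega), mul_zero, add_zero]
  · simp [hodd.neg_pow]

lemma sum_sum_symWeight_mul_rpow (hη : 0 ≤ η) (t : ℝ) :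
    ∑ i, ∑ j, symWeight k i * symWeight k j * (symPoint k η i ^ 2 + symPoint k η j ^ 2) ^ t =
      4 * η ^ t * (Δ_[1])^[2 * k] (fun u => u ^ t) 0 := by
  have hpair : ∀ j l : Fin (k + 1), ((j : ℝ) * η + l * η) ^ t = η ^ t * ((j : ℝ) + l) ^ t :=
    fun j l => by rw [← add_mul, Real.mul_rpow (by positivity) hη, mul_comm]
  simp only [Fintype.sum_sum_type, symWeight, symPoint, Sum.elim_inl, Sum.elim_inr, neg_sq,
    sq_sqrt_cast_mul hη, hpair, mul_left_comm _ (η ^ t), ← Finset.mul_sum,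
    ← sum_sum_binomWeight_mul]
  rw [← Finset.sum_add_distrib, Finset.mul_sum]
  exact Finset.sum_congr rfl fun _ _ => by ring

lemma sum_sum_symWeight_mul_inv_eq (hη : 0 ≤ η) (t a : ℝ) :
    ∑ i, ∑ j, symWeight k i * symWeight k j * (1 + (symPoint k η i - symPoint k η j) ^ 2 +
      a * (symPoint k η i ^ 2 + symPoint k η j ^ 2) ^ t)⁻¹ =
      -(4 * a * η ^ t * (Δ_[1])^[2 * k] (fun u => u ^ t) 0) +
        ∑ i, ∑ j, symWeight k i * symWeight k j *
          kernelRemainder t a (2 * k) (symPoint k η i) (symPoint k η j) := by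
  set x := symPoint k η
  set c := symWeight k
  have hsplit : ∀ i j, c i * c j * (1 + (x i - x j) ^ 2 + a * (x i ^ 2 + x j ^ 2) ^ t)⁻¹ =
      c i * c j * ∑ r ∈ range (2 * k), (-(x i - x j) ^ 2) ^ r
        - a * (c i * c j * (x i ^ 2 + x j ^ 2) ^ t)
        + c i * c j * kernelRemainder t a (2 * k) (x i) (x j) := fun i j => by
    rw [kernelRemainder]
    ring
  simp only [hsplit, Finset.sum_add_distrib, Finset.sum_sub_distrib, ← Finset.mul_sum]
  rw [sum_sum_mul_geom_sum_eq_zero fun p hp => sum_symWeight_mul_symPoint_pow hη hp,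
    sum_sum_symWeight_mul_rpow hη]
  ring

end SymmetricConfiguration

lemma abs_sum_sum_mul_le {ι : Type*} [Fintype ι] (c : ι → ℝ) {E : ι → ι → ℝ} {M : ℝ}
    (hE : ∀ i j, |E i j| ≤ M) :
    |∑ i, ∑ j, c i * c j * E i j| ≤ (∑ i, |c i|) ^ 2 * M :=
  calc |∑ i, ∑ j, c i * c j * E i j| ≤ ∑ i, |∑ j, c i * c j * E i j| :=
        Finset.abs_sum_le_sum_abs _ _
    _ ≤ ∑ i, ∑ j, |c i| * |c j| * M :=
        Finset.sum_le_sum fun i _ => (Finset.abs_sum_le_sum_abs _ _).trans <|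
          Finset.sum_le_sum fun j _ => by
            rw [abs_mul, abs_mul]
            exact mul_le_mul_of_nonneg_left (hE i j) (by positivity)
    _ = (∑ i, |c i|) ^ 2 * M := by
        rw [sq, Finset.sum_mul_sum]
        simp only [Finset.sum_mul]

lemma exists_mem_Ioc_mul_rpow_add_self_lt (M : ℝ) {γ ε : ℝ} (hγ : 0 < γ) (hε : 0 < ε) :
    ∃ η ∈ Set.Ioc (0 : ℝ) 1, M * (η ^ γ + η) < ε := by
  have hcont : ContinuousAt (fun η : ℝ => M * (η ^ γ + η)) 0 :=
    ((Real.continuousAt_rpow_const 0 γ (Or.inr hγ.le)).add continuousAt_id).const_mul M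
  have hsmall : ∀ᶠ η in nhds 0, M * (η ^ γ + η) < ε :=
    hcont.tendsto.eventually_lt_const (by simpa [Real.zero_rpow hγ.ne'] using hε)
  obtain ⟨η, hlt, hη⟩ := ((hsmall.filter_mono nhdsWithin_le_nhds).and
    (Ioc_mem_nhdsGT one_pos)).exists
  exact ⟨η, hη, hlt⟩

lemma exists_sum_sum_symWeight_mul_lt_zero {t a : ℝ} {k : ℕ} (hk : 0 < k)
    (ht : t ∈ Set.Ioo (2 * (k : ℝ) - 1) (2 * k)) (ha : 0 < a) :
    ∃ η, ∑ i, ∑ j, symWeight k i * symWeight k j * (1 + (symPoint k η i - symPoint k η j) ^ 2 +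
      a * (symPoint k η i ^ 2 + symPoint k η j ^ 2) ^ t)⁻¹ < 0 := by
  obtain ⟨ht₁, ht₂⟩ := ht
  have hk₁ : (1 : ℝ) ≤ k := by exact_mod_cast hk
  obtain ⟨C, hC⟩ := exists_abs_kernelRemainder_le (R := k) (by linarith) ha.le k.cast_nonneg
    (even_two_mul k)
  set B := (Δ_[1])^[2 * k] (fun u : ℝ => u ^ t) 0
  have hB : 0 < B := by
    obtain ⟨n, hn⟩ : ∃ n, 2 * k = n + 1 := ⟨2 * k - 1, by omega⟩
    have hnt : (n : ℝ) < t := by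
      have : (n : ℝ) + 1 = 2 * k := by exact_mod_cast hn.symm
      linarith
    simpa only [B, hn] using fwdDiff_iter_rpow_pos one_pos hnt le_rfl
  set W := ∑ i, |symWeight k i|
  obtain ⟨η, ⟨hη₀, hη₁⟩, hsmall⟩ :=
    exists_mem_Ioc_mul_rpow_add_self_lt (W ^ 2 * C) (γ := 2 * k - t) (by linarith)
      (by positivity : 0 < 4 * a * B)
  refine ⟨η, ?_⟩
  have herr := abs_sum_sum_mul_le (symWeight k)
    (E := fun i j => kernelRemainder t a (2 * k) (symPoint k η i) (symPoint k η j)) fun i j =>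
      hC η ⟨hη₀, hη₁⟩ _ _ (symPoint_sq_le hη₀.le i) (symPoint_sq_le hη₀.le j)
  have hpow : η ^ (2 * k) + η ^ (t + 1) = η ^ t * (η ^ (2 * k - t : ℝ) + η) := by
    rw [mul_add, ← Real.rpow_add hη₀, Real.rpow_add_one hη₀.ne', ← Real.rpow_natCast]
    push_cast
    ring_nf
  rw [hpow] at herr
  have hηt : 0 < η ^ t := Real.rpow_pos_of_pos hη₀ t
  rw [sum_sum_symWeight_mul_inv_eq hη₀.le]
  nlinarith [le_abs_self (∑ i, ∑ j, symWeight k i * symWeight k j *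
    kernelRemainder t a (2 * k) (symPoint k η i) (symPoint k η j)),
    mul_lt_mul_of_pos_left hsmall hηt]

lemma exists_fin_not_nonneg_of_sum_sum_lt_zero {ι : Type*} [Fintype ι] (K : ℝ → ℝ → ℝ)
    (x c : ι → ℝ) (h : ∑ i, ∑ j, c i * c j * K (x i) (x j) < 0) :
    ∃ (n : ℕ) (y : Fin n → ℝ) (d : Fin n → ℂ),
      ¬ (0 ≤ ∑ j, ∑ k, d j * (starRingEnd ℂ) (d k) * (K (y j) (y k) : ℂ)) := by
  set e := (Fintype.equivFin ι).symm
  refine ⟨Fintype.card ι, x ∘ e, fun j => (c (e j) : ℂ), ?_⟩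
  have hreal : ∑ j, ∑ k, (c (e j) : ℂ) * (starRingEnd ℂ) (c (e k)) * (K (x (e j)) (x (e k)) : ℂ) =
      ((∑ i, ∑ j, c i * c j * K (x i) (x j) : ℝ) : ℂ) := by
    simp only [Complex.conj_ofReal]
    push_cast
    exact Fintype.sum_equiv e _ _ fun j => Fintype.sum_equiv e _ _ fun k => rfl
  rw [Function.comp_def, hreal, Complex.zero_le_real, not_le]
  exact h

/-- If `t ∈ (2k−1, 2k)` for some positive integer `k` and `a > 0`, then
the kernel `K_{t,a}` is not positive-definite on `ℝ × ℝ`. -/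
theorem stmt3 (t a : ℝ) (k : ℕ) (hk : 0 < k)
    (ht : t ∈ Set.Ioo (2 * (k : ℝ) - 1) (2 * (k : ℝ))) (ha : 0 < a) :
    ∃ (n : ℕ) (x : Fin n → ℝ) (c : Fin n → ℂ),
      ¬ (0 ≤ ∑ j, ∑ k, c j * (starRingEnd ℂ) (c k) *
        (((1 / Real.pi) * (1 + (x j - x k) ^ 2 + a * ((x j) ^ 2 + (x k) ^ 2) ^ t) ⁻¹ : ℝ) : ℂ)) := by
  obtain ⟨η, hη⟩ := exists_sum_sum_symWeight_mul_lt_zero hk ht ha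
  refine exists_fin_not_nonneg_of_sum_sum_lt_zero
    (fun x y => 1 / Real.pi * (1 + (x - y) ^ 2 + a * (x ^ 2 + y ^ 2) ^ t)⁻¹)
    (symPoint k η) (symWeight k) ?_
  simp only [mul_left_comm _ (1 / Real.pi), ← Finset.mul_sum]
  exact mul_neg_of_pos_of_neg (by positivity) hη
end

section
/- For every real number t with 0 < t ≤ 1 and every real number a > 0, the kernel N(x, y) = (x − y)² + a(x² + y²)^t on ℝ × ℝ is a conditionally negative-definite kernel: it is symmetric, and for every n ≥ 2, every x₁, …, xₙ ∈ ℝ, and every c₁, …, cₙ ∈ ℂ with ∑_{j=1}^n c_j = 0, one has ∑_{j=1}^n ∑_{k=1}^n c_j · conj(c_k) · N(x_j, x_k) ≤ 0. -/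
/-!
For `0 < t < 1` and `s ≥ 0`, `s ^ t` is a positive multiple of
`∫₀^∞ (1 - exp (-l s)) l ^ (-t - 1) dl`. For each `l > 0`, the kernel
`(j, k) ↦ 1 - exp (-l (s j + s k)) = 1 - u j u k` with `u j = exp (-l s j)` is conditionally
negative definite, being a constant minus a rank-one positive semidefinite kernel; integrating,
so is `(s j + s k) ^ t`, and with `s j = x j ^ 2` so is `a (x j ^ 2 + x k ^ 2) ^ t`. The kernel
`(x j - x k) ^ 2` is conditionally negative definite, as its form on `∑ b = 0` is
`-2 (∑ b x) ^ 2`. For a real symmetric kernel, complex coefficients reduce to real ones: the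
imaginary part of the form vanishes by symmetry and the real part is the sum of the forms of
`re c` and `im c`.
-/

open Finset ComplexOrder MeasureTheory Set Real

section QuadraticForm

variable {ι : Type*} [Fintype ι]

theorem sum_sum_mul_mul_mul_eq_mul (b u v : ι → ℝ) :
    ∑ j, ∑ k, b j * b k * (u j * v k) = (∑ j, b j * u j) * ∑ k, b k * v k := by
  rw [sum_mul_sum]
  exact sum_congr rfl fun j _ => sum_congr rfl fun k _ => by ring

theorem sum_sum_mul_mul_mul_eq_sq (b u : ι → ℝ) :
    ∑ j, ∑ k, b j * b k * (u j * u k) = (∑ j, b j * u j) ^ 2 := by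
  rw [sum_sum_mul_mul_mul_eq_mul, sq]

theorem sum_sum_mul_mul_add_eq_zero {b : ι → ℝ} (hb : ∑ j, b j = 0) (f : ι → ℝ) :
    ∑ j, ∑ k, b j * b k * (f j + f k) = 0 := by
  have hsplit : ∀ j k, b j * b k * (f j + f k)
      = b j * b k * (f j * 1) + b j * b k * (1 * f k) := fun j k => by ring
  simp only [hsplit, sum_add_distrib]
  rw [sum_sum_mul_mul_mul_eq_mul, sum_sum_mul_mul_mul_eq_mul]
  simp [hb]

theorem sum_sum_mul_mul_sub_sq_nonpos {b : ι → ℝ} (hb : ∑ j, b j = 0) (x : ι → ℝ) :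
    ∑ j, ∑ k, b j * b k * (x j - x k) ^ 2 ≤ 0 := by
  have hsplit : ∀ j k, b j * b k * (x j - x k) ^ 2
      = b j * b k * (x j ^ 2 + x k ^ 2) - 2 * (b j * b k * (x j * x k)) := fun j k => by ring
  simp only [hsplit, sum_sub_distrib, ← mul_sum]
  rw [sum_sum_mul_mul_add_eq_zero hb, sum_sum_mul_mul_mul_eq_sq]
  nlinarith [sq_nonneg (∑ j, b j * x j)]

theorem sum_sum_mul_mul_one_sub_mul_nonpos {b : ι → ℝ} (hb : ∑ j, b j = 0) (u : ι → ℝ) :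
    ∑ j, ∑ k, b j * b k * (1 - u j * u k) ≤ 0 := by
  have h1 := sum_sum_mul_mul_mul_eq_sq b 1
  simp only [Pi.one_apply, mul_one, hb] at h1
  simp only [mul_sub, mul_one, sum_sub_distrib, h1, sum_sum_mul_mul_mul_eq_sq]
  nlinarith [sq_nonneg (∑ j, b j * u j)]

theorem sum_sum_mul_conj_mul_nonpos_of_real {r : ι → ι → ℝ} (hsymm : ∀ j k, r j k = r k j)
    (hr : ∀ b : ι → ℝ, ∑ j, b j = 0 → ∑ j, ∑ k, b j * b k * r j k ≤ 0)
    {c : ι → ℂ} (hc : ∑ j, c j = 0) :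
    ∑ j, ∑ k, c j * starRingEnd ℂ (c k) * (r j k : ℂ) ≤ 0 := by
  have hre : ∑ j, (c j).re = 0 := by rw [← Complex.re_sum, hc, Complex.zero_re]
  have him : ∑ j, (c j).im = 0 := by rw [← Complex.im_sum, hc, Complex.zero_im]
  refine Complex.le_def.2 ⟨?_, ?_⟩
  · have hsplit : ∀ j k, (c j * starRingEnd ℂ (c k) * (r j k : ℂ)).re
        = (c j).re * (c k).re * r j k + (c j).im * (c k).im * r j k := fun j k => by
      simp only [Complex.mul_re, Complex.mul_im, Complex.conj_re, Complex.conj_im,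
        Complex.ofReal_re, Complex.ofReal_im]
      ring
    simp only [Complex.re_sum, hsplit, sum_add_distrib, Complex.zero_re]
    exact add_nonpos (hr _ hre) (hr _ him)
  · refine Complex.conj_eq_iff_im.1 ?_
    simp only [map_sum, map_mul, Complex.conj_conj, Complex.conj_ofReal]
    rw [sum_comm]
    exact sum_congr rfl fun j _ => sum_congr rfl fun k _ => by rw [hsymm]; ring

end QuadraticForm

section RpowIntegral

variable {t : ℝ}

theorem one_sub_exp_neg_nonneg {x : ℝ} (hx : 0 ≤ x) : 0 ≤ 1 - exp (-x) :=
  sub_nonneg.2 (exp_le_one_iff.2 (neg_nonpos.2 hx))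

theorem integrableOn_one_sub_exp_neg_mul_rpow (ht0 : 0 < t) (ht1 : t < 1) :
    IntegrableOn (fun l : ℝ => (1 - exp (-l)) * l ^ (-t - 1)) (Ioi 0) := by
  have hcont : ContinuousOn (fun l : ℝ => (1 - exp (-l)) * l ^ (-t - 1)) (Ioi 0) :=
    (continuous_const.sub (continuous_exp.comp continuous_neg)).continuousOn.mul
      (continuousOn_id.rpow_const fun l hl => Or.inl (ne_of_gt hl))
  have hnorm : ∀ l : ℝ, 0 < l →
      ‖(1 - exp (-l)) * l ^ (-t - 1)‖ = (1 - exp (-l)) * l ^ (-t - 1) := fun l hl =>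
    Real.norm_of_nonneg (mul_nonneg (one_sub_exp_neg_nonneg hl.le) (rpow_nonneg hl.le _))
  -- near `0` the integrand is `O(l ^ (-t))`, near `∞` it is `O(l ^ (-t - 1))`
  have hnear : IntegrableOn (fun l : ℝ => (1 - exp (-l)) * l ^ (-t - 1)) (Ioc 0 1) := by
    have hdom : IntegrableOn (fun l : ℝ => l ^ (-t)) (Ioc 0 1) :=
      (intervalIntegral.intervalIntegrable_rpow' (by linarith)).1
    refine hdom.mono' ((hcont.mono Ioc_subset_Ioi_self).aestronglyMeasurable measurableSet_Ioc)
      ((ae_restrict_iff' measurableSet_Ioc).2 (.of_forall fun l hl => ?_))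
    rw [hnorm l hl.1]
    calc (1 - exp (-l)) * l ^ (-t - 1) ≤ l * l ^ (-t - 1) :=
          mul_le_mul_of_nonneg_right (by linarith [one_sub_le_exp_neg l]) (rpow_nonneg hl.1.le _)
      _ = l ^ (-t) := by rw [rpow_sub_one hl.1.ne', mul_div_cancel₀ _ hl.1.ne']
  have hfar : IntegrableOn (fun l : ℝ => (1 - exp (-l)) * l ^ (-t - 1)) (Ioi 1) := by
    refine (integrableOn_Ioi_rpow_of_lt (a := -t - 1) (by linarith) one_pos).mono'
      ((hcont.mono (Ioi_subset_Ioi zero_le_one)).aestronglyMeasurable measurableSet_Ioi)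
      ((ae_restrict_iff' measurableSet_Ioi).2 (.of_forall fun l hl => ?_))
    have hl : (0 : ℝ) < l := one_pos.trans hl
    rw [hnorm l hl]
    exact mul_le_of_le_one_left (rpow_nonneg hl.le _) (by linarith [exp_pos (-l)])
  simpa only [Ioc_union_Ioi_eq_Ioi zero_le_one] using hnear.union hfar

theorem integral_one_sub_exp_neg_mul_rpow_pos (ht0 : 0 < t) (ht1 : t < 1) :
    0 < ∫ l in Ioi (0 : ℝ), (1 - exp (-l)) * l ^ (-t - 1) := by
  have hpos : ∀ l : ℝ, 0 < l → 0 < (1 - exp (-l)) * l ^ (-t - 1) := fun l hl =>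
    mul_pos (sub_pos.2 (exp_lt_one_iff.2 (neg_lt_zero.2 hl))) (rpow_pos_of_pos hl _)
  rw [setIntegral_pos_iff_support_of_nonneg_ae ((ae_restrict_iff' measurableSet_Ioi).2
      (.of_forall fun l hl => (hpos l hl).le)) (integrableOn_one_sub_exp_neg_mul_rpow ht0 ht1)]
  have hsub : Ioi (0 : ℝ) ⊆
      Function.support (fun l : ℝ => (1 - exp (-l)) * l ^ (-t - 1)) ∩ Ioi 0 :=
    fun l hl => ⟨(hpos l hl).ne', hl⟩
  exact lt_of_lt_of_le (by simp) (measure_mono hsub)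

theorem one_sub_exp_neg_mul_mul_rpow_eq {s l : ℝ} (hs : 0 < s) (hl : 0 < l) :
    (1 - exp (-(l * s))) * l ^ (-t - 1)
      = s ^ t * s * ((1 - exp (-(s * l))) * (s * l) ^ (-t - 1)) := by
  rw [mul_rpow hs.le hl.le, mul_comm s l]
  have hs_pow : s ^ t * s * s ^ (-t - 1) = 1 := by
    rw [rpow_sub_one hs.ne', rpow_neg hs.le]
    field_simp [(rpow_pos_of_pos hs t).ne']
  linear_combination (-(1 - exp (-(l * s))) * l ^ (-t - 1)) * hs_pow

theorem integrableOn_one_sub_exp_neg_mul_mul_rpow (ht0 : 0 < t) (ht1 : t < 1) {s : ℝ}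
    (hs : 0 ≤ s) :
    IntegrableOn (fun l : ℝ => (1 - exp (-(l * s))) * l ^ (-t - 1)) (Ioi 0) := by
  rcases hs.eq_or_lt with rfl | hs
  · simp
  have hcomp := (integrableOn_Ioi_comp_mul_left_iff
    (fun l : ℝ => (1 - exp (-l)) * l ^ (-t - 1)) 0 hs).2
    (by simpa only [mul_zero] using integrableOn_one_sub_exp_neg_mul_rpow ht0 ht1)
  exact IntegrableOn.congr_fun (hcomp.const_mul (s ^ t * s))
    (fun l hl => (one_sub_exp_neg_mul_mul_rpow_eq hs hl).symm) measurableSet_Ioi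

theorem integral_one_sub_exp_neg_mul_mul_rpow (ht0 : 0 < t) {s : ℝ} (hs : 0 ≤ s) :
    ∫ l in Ioi (0 : ℝ), (1 - exp (-(l * s))) * l ^ (-t - 1)
      = s ^ t * ∫ l in Ioi (0 : ℝ), (1 - exp (-l)) * l ^ (-t - 1) := by
  rcases hs.eq_or_lt with rfl | hs
  · simp [zero_rpow ht0.ne']
  rw [setIntegral_congr_fun measurableSet_Ioi fun l hl => one_sub_exp_neg_mul_mul_rpow_eq hs hl,
    integral_const_mul,
    integral_comp_mul_left_Ioi (fun l : ℝ => (1 - exp (-l)) * l ^ (-t - 1)) 0 hs,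
    mul_zero, smul_eq_mul, ← mul_assoc, mul_assoc (s ^ t), mul_inv_cancel₀ hs.ne', mul_one]

end RpowIntegral

section ConditionallyNegativeDefinite

variable {ι : Type*} [Fintype ι] {t : ℝ}

theorem sum_sum_mul_mul_add_rpow_nonpos_of_lt_one (ht0 : 0 < t) (ht1 : t < 1) {s : ι → ℝ}
    (hs : ∀ j, 0 ≤ s j) {b : ι → ℝ} (hb : ∑ j, b j = 0) :
    ∑ j, ∑ k, b j * b k * (s j + s k) ^ t ≤ 0 := by
  have hint : ∀ j k, IntegrableOn
      (fun l : ℝ => b j * b k * ((1 - exp (-(l * (s j + s k)))) * l ^ (-t - 1))) (Ioi 0) :=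
    fun j k => (integrableOn_one_sub_exp_neg_mul_mul_rpow ht0 ht1
      (add_nonneg (hs j) (hs k))).const_mul _
  have hrepr : (∑ j, ∑ k, b j * b k * (s j + s k) ^ t) *
        ∫ l in Ioi (0 : ℝ), (1 - exp (-l)) * l ^ (-t - 1)
      = ∫ l in Ioi (0 : ℝ), ∑ j, ∑ k,
          b j * b k * ((1 - exp (-(l * (s j + s k)))) * l ^ (-t - 1)) := by
    rw [integral_finsetSum _ fun j _ => integrable_finsetSum _ fun k _ => hint j k, sum_mul]
    refine sum_congr rfl fun j _ => ?_
    rw [integral_finsetSum _ fun k _ => hint j k, sum_mul]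
    refine sum_congr rfl fun k _ => ?_
    rw [integral_const_mul, integral_one_sub_exp_neg_mul_mul_rpow ht0 (add_nonneg (hs j) (hs k)),
      mul_assoc]
  have hpointwise : ∀ l ∈ Ioi (0 : ℝ), ∑ j, ∑ k,
      b j * b k * ((1 - exp (-(l * (s j + s k)))) * l ^ (-t - 1)) ≤ 0 := by
    intro l hl
    have hfactor : ∀ j k, b j * b k * ((1 - exp (-(l * (s j + s k)))) * l ^ (-t - 1))
        = b j * b k * (1 - exp (-(l * s j)) * exp (-(l * s k))) * l ^ (-t - 1) := fun j k => by
      rw [← exp_add]; ring_nf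
    simp only [hfactor, ← sum_mul]
    exact mul_nonpos_of_nonpos_of_nonneg (sum_sum_mul_mul_one_sub_mul_nonpos hb _)
      (rpow_nonneg (le_of_lt hl) _)
  exact nonpos_of_mul_nonpos_left (hrepr ▸ setIntegral_nonpos measurableSet_Ioi hpointwise)
    (integral_one_sub_exp_neg_mul_rpow_pos ht0 ht1)

theorem sum_sum_mul_mul_add_rpow_nonpos (ht0 : 0 < t) (ht1 : t ≤ 1) {s : ι → ℝ}
    (hs : ∀ j, 0 ≤ s j) {b : ι → ℝ} (hb : ∑ j, b j = 0) :
    ∑ j, ∑ k, b j * b k * (s j + s k) ^ t ≤ 0 := by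
  rcases ht1.lt_or_eq with ht1 | rfl
  · exact sum_sum_mul_mul_add_rpow_nonpos_of_lt_one ht0 ht1 hs hb
  · simp only [rpow_one, sum_sum_mul_mul_add_eq_zero hb, le_refl]

theorem sum_sum_mul_mul_sub_sq_add_mul_rpow_nonpos {a : ℝ} (ht0 : 0 < t) (ht1 : t ≤ 1)
    (ha : 0 ≤ a) (x : ι → ℝ) {b : ι → ℝ} (hb : ∑ j, b j = 0) :
    ∑ j, ∑ k, b j * b k * ((x j - x k) ^ 2 + a * (x j ^ 2 + x k ^ 2) ^ t) ≤ 0 := by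
  have hsplit : ∀ j k, b j * b k * ((x j - x k) ^ 2 + a * (x j ^ 2 + x k ^ 2) ^ t)
      = b j * b k * (x j - x k) ^ 2 + a * (b j * b k * (x j ^ 2 + x k ^ 2) ^ t) :=
    fun j k => by ring
  simp only [hsplit, sum_add_distrib, ← mul_sum]
  exact add_nonpos (sum_sum_mul_mul_sub_sq_nonpos hb x) (mul_nonpos_of_nonneg_of_nonpos ha
    (sum_sum_mul_mul_add_rpow_nonpos ht0 ht1 (fun j => sq_nonneg (x j)) hb))

end ConditionallyNegativeDefinite

/-- For `0 < t ≤ 1` and `a > 0`, the kernel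
`N(x,y) = (x−y)² + a(x²+y²)^t` is conditionally negative-definite on `ℝ × ℝ`:
it is symmetric, and for all `n ≥ 2`, all `x ∈ ℝⁿ` and `c ∈ ℂⁿ` with `∑ c_j = 0`,
`∑_{j,k} c_j conj(c_k) N(x_j, x_k) ≤ 0`. -/
theorem stmt4 (t a : ℝ) (ht0 : 0 < t) (ht1 : t ≤ 1) (ha : 0 < a) :
    (∀ x y : ℝ, ((x - y) ^ 2 + a * (x ^ 2 + y ^ 2) ^ t)
      = ((y - x) ^ 2 + a * (y ^ 2 + x ^ 2) ^ t)) ∧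
    (∀ (n : ℕ), 2 ≤ n → ∀ (x : Fin n → ℝ) (c : Fin n → ℂ), (∑ j, c j) = 0 →
      (∑ j, ∑ k, c j * (starRingEnd ℂ) (c k) *
        (((x j - x k) ^ 2 + a * ((x j) ^ 2 + (x k) ^ 2) ^ t : ℝ) : ℂ)) ≤ 0) := by
  have hsymm : ∀ x y : ℝ, ((x - y) ^ 2 + a * (x ^ 2 + y ^ 2) ^ t)
      = ((y - x) ^ 2 + a * (y ^ 2 + x ^ 2) ^ t) := fun x y => by
    rw [add_comm (y ^ 2)]; ring
  refine ⟨hsymm, fun n _ x c hc => ?_⟩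
  exact sum_sum_mul_conj_mul_nonpos_of_real (fun j k => hsymm (x j) (x k))
    (fun b hb => sum_sum_mul_mul_sub_sq_add_mul_rpow_nonpos ht0 ht1 ha.le x hb) hc
end

section
/- For every real number t with 0 < t ≤ 1, the kernel (x, y) ↦ (x² + y²)^t on ℝ × ℝ is a conditionally negative-definite kernel: it is symmetric, and for every n ≥ 2, every x₁, …, xₙ ∈ ℝ, and every c₁, …, cₙ ∈ ℂ with ∑_{j=1}^n c_j = 0, one has ∑_{j=1}^n ∑_{k=1}^n c_j · conj(c_k) · (x_j² + x_k²)^t ≤ 0. -/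
open Finset ComplexOrder
open MeasureTheory Set

/-- integrability of the Bernstein integrand -/
lemma stmt5_int {t : ℝ} (ht0 : 0 < t) (ht1 : t < 1) {s : ℝ} (hs : 0 ≤ s) :
    IntegrableOn (fun l : ℝ => (1 - Real.exp (-(s * l))) * l ^ (-t - 1)) (Ioi 0) := by
  have hcont : ContinuousOn (fun l : ℝ => (1 - Real.exp (-(s * l))) * l ^ (-t - 1)) (Ioi 0) := by
    apply ContinuousOn.mul
    · exact (continuous_const.sub ((continuous_const.mul continuous_id).neg.rexp)).continuousOn
    · exact ContinuousOn.rpow_const continuousOn_id (fun x hx => Or.inl (ne_of_gt hx))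
  have h1 : IntegrableOn (fun l : ℝ => (1 - Real.exp (-(s * l))) * l ^ (-t - 1)) (Ioc 0 1) := by
    have hg : IntegrableOn (fun l : ℝ => s * l ^ (-t)) (Ioc 0 1) := by
      exact ((intervalIntegral.intervalIntegrable_rpow' (by linarith : (-1:ℝ) < -t)).1).const_mul s
    apply hg.mono' ((hcont.mono Ioc_subset_Ioi_self).aestronglyMeasurable measurableSet_Ioc)
    filter_upwards [ae_restrict_mem measurableSet_Ioc] with l hl
    have hl0 : 0 < l := hl.1
    have hsl : 0 ≤ s * l := mul_nonneg hs hl0.le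
    have he1 : Real.exp (-(s * l)) ≤ 1 := Real.exp_le_one_iff.2 (by linarith)
    have he2 : 1 - s * l ≤ Real.exp (-(s * l)) := by
      have := Real.add_one_le_exp (-(s * l)); linarith
    have hrp : (0:ℝ) ≤ l ^ (-t - 1) := Real.rpow_nonneg hl0.le _
    rw [Real.norm_eq_abs, abs_of_nonneg (mul_nonneg (by linarith) hrp)]
    calc (1 - Real.exp (-(s * l))) * l ^ (-t - 1) ≤ (s * l) * l ^ (-t - 1) := by
          apply mul_le_mul_of_nonneg_right (by linarith) hrp
      _ = s * l ^ (-t) := by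
          have h : l ^ (-t - 1) * l = l ^ (-t) := by
            rw [← Real.rpow_add_one hl0.ne']; norm_num
          rw [mul_assoc, mul_comm l, h]
  have h2 : IntegrableOn (fun l : ℝ => (1 - Real.exp (-(s * l))) * l ^ (-t - 1)) (Ioi 1) := by
    have hg : IntegrableOn (fun l : ℝ => l ^ (-t - 1)) (Ioi 1) :=
      integrableOn_Ioi_rpow_of_lt (by linarith) one_pos
    apply hg.mono' ((hcont.mono (Ioi_subset_Ioi zero_le_one)).aestronglyMeasurable measurableSet_Ioi)
    filter_upwards [ae_restrict_mem measurableSet_Ioi] with l hl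
    have hl0 : (0:ℝ) < l := lt_trans one_pos hl
    have hsl : 0 ≤ s * l := mul_nonneg hs hl0.le
    have he1 : Real.exp (-(s * l)) ≤ 1 := Real.exp_le_one_iff.2 (by linarith)
    have hrp : (0:ℝ) ≤ l ^ (-t - 1) := Real.rpow_nonneg hl0.le _
    rw [Real.norm_eq_abs, abs_of_nonneg (mul_nonneg (by linarith) hrp)]
    nlinarith [Real.exp_pos (-(s * l))]
  have := h1.union h2
  rwa [Ioc_union_Ioi_eq_Ioi zero_le_one] at this

/-- scaling -/
lemma stmt5_scale {t : ℝ} {s : ℝ} (hs : 0 < s) :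
    ∫ l in Ioi (0:ℝ), (1 - Real.exp (-(s * l))) * l ^ (-t - 1)
      = s ^ t * ∫ l in Ioi (0:ℝ), (1 - Real.exp (-l)) * l ^ (-t - 1) := by
  have key := integral_comp_mul_left_Ioi
    (fun u : ℝ => (1 - Real.exp (-u)) * u ^ (-t - 1)) 0 hs
  rw [mul_zero] at key
  have congr1 : ∫ l in Ioi (0:ℝ), (1 - Real.exp (-(s * l))) * (s * l) ^ (-t - 1)
      = s⁻¹ • ∫ u in Ioi (0:ℝ), (1 - Real.exp (-u)) * u ^ (-t - 1) := key
  have congr2 : ∫ l in Ioi (0:ℝ), (1 - Real.exp (-(s * l))) * (s * l) ^ (-t - 1)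
      = s ^ (-t - 1) * ∫ l in Ioi (0:ℝ), (1 - Real.exp (-(s * l))) * l ^ (-t - 1) := by
    rw [← integral_const_mul]
    apply setIntegral_congr_fun measurableSet_Ioi
    intro l hl
    show (1 - Real.exp (-(s * l))) * (s * l) ^ (-t - 1)
      = s ^ (-t - 1) * ((1 - Real.exp (-(s * l))) * l ^ (-t - 1))
    rw [Real.mul_rpow hs.le (le_of_lt hl)]
    ring
  have hsne : s ^ (-t - 1) ≠ 0 := (Real.rpow_pos_of_pos hs _).ne'
  rw [congr2] at congr1
  have : ∫ l in Ioi (0:ℝ), (1 - Real.exp (-(s * l))) * l ^ (-t - 1)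
      = (s ^ (-t - 1))⁻¹ * s⁻¹ * ∫ u in Ioi (0:ℝ), (1 - Real.exp (-u)) * u ^ (-t - 1) := by
    rw [smul_eq_mul] at congr1
    field_simp at congr1 ⊢
    linarith [congr1]
  rw [this]
  congr 1
  rw [← Real.rpow_neg_one s, ← Real.rpow_neg hs.le, ← Real.rpow_add hs]
  congr 1
  ring

/-- positivity of the base integral -/
lemma stmt5_pos {t : ℝ} (ht0 : 0 < t) (ht1 : t < 1) :
    0 < ∫ l in Ioi (0:ℝ), (1 - Real.exp (-l)) * l ^ (-t - 1) := by
  have hint : IntegrableOn (fun l : ℝ => (1 - Real.exp (-(1 * l))) * l ^ (-t - 1)) (Ioi 0) :=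
    stmt5_int ht0 ht1 zero_le_one
  simp only [one_mul] at hint
  rw [setIntegral_pos_iff_support_of_nonneg_ae _ hint]
  · have hsub : Ioi (0:ℝ) ⊆ Function.support (fun l : ℝ => (1 - Real.exp (-l)) * l ^ (-t - 1)) := by
      intro l hl
      have h1 : 0 < 1 - Real.exp (-l) := by
        have := Real.exp_lt_one_iff.2 (neg_lt_zero.2 hl); linarith
      exact ne_of_gt (mul_pos h1 (Real.rpow_pos_of_pos hl _))
    rw [Set.inter_eq_right.2 hsub]
    simp [Real.volume_Ioi]
  · filter_upwards [ae_restrict_mem measurableSet_Ioi] with l hl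
    have h1 : Real.exp (-l) ≤ 1 := Real.exp_le_one_iff.2 (by linarith [mem_Ioi.1 hl])
    exact mul_nonneg (by linarith) (Real.rpow_nonneg (le_of_lt hl) _)

lemma stmt5_rep {t : ℝ} (ht0 : 0 < t) (ht1 : t < 1) {s : ℝ} (hs : 0 ≤ s) :
    s ^ t = (∫ l in Ioi (0:ℝ), (1 - Real.exp (-l)) * l ^ (-t - 1))⁻¹
      * ∫ l in Ioi (0:ℝ), (1 - Real.exp (-(s * l))) * l ^ (-t - 1) := by
  rcases eq_or_lt_of_le hs with h | h
  · rw [← h]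
    simp [Real.zero_rpow ht0.ne']
  · rw [stmt5_scale h]
    field_simp [(stmt5_pos ht0 ht1).ne']

open ComplexOrder in
lemma stmt5_main {t : ℝ} (ht0 : 0 < t) (ht1 : t < 1) {n : ℕ} (x : Fin n → ℝ)
    (c : Fin n → ℂ) (hc : (∑ j, c j) = 0) :
    (∑ j, ∑ k, c j * (starRingEnd ℂ) (c k) *
        ((((x j) ^ 2 + (x k) ^ 2 : ℝ) ^ t : ℝ) : ℂ)) ≤ 0 := by
  set a : Fin n → ℝ := fun j => (x j) ^ 2 with ha_def
  have ha : ∀ j, 0 ≤ a j := fun j => sq_nonneg _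
  set I1 : ℝ := ∫ l in Ioi (0:ℝ), (1 - Real.exp (-l)) * l ^ (-t - 1) with hI1_def
  have hI1 : 0 < I1 := stmt5_pos ht0 ht1
  -- the complex integrand for each pair
  set F : Fin n → Fin n → ℝ → ℂ := fun j k l =>
    c j * (starRingEnd ℂ) (c k) *
      (((1 - Real.exp (-((a j + a k) * l))) * l ^ (-t - 1) : ℝ) : ℂ) with hF_def
  have hFint : ∀ j k, IntegrableOn (F j k) (Ioi 0) := by
    intro j k
    exact ((stmt5_int ht0 ht1 (add_nonneg (ha j) (ha k))).ofReal).const_mul _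
  -- step 1: each term is I1⁻¹ times an integral
  have step1 : (∑ j, ∑ k, c j * (starRingEnd ℂ) (c k) *
        ((((x j) ^ 2 + (x k) ^ 2 : ℝ) ^ t : ℝ) : ℂ))
      = (I1⁻¹ : ℂ) * ∑ j, ∑ k, ∫ l in Ioi (0:ℝ), F j k l := by
    rw [Finset.mul_sum]
    apply Finset.sum_congr rfl; intro j _
    rw [Finset.mul_sum]
    apply Finset.sum_congr rfl; intro k _
    have hF1 : ∫ l in Ioi (0:ℝ), F j k l
        = c j * (starRingEnd ℂ) (c k) *
          ((∫ l in Ioi (0:ℝ), (1 - Real.exp (-((a j + a k) * l))) * l ^ (-t - 1) : ℝ) : ℂ) := by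
      rw [hF_def]
      simp only
      rw [integral_const_mul]
      congr 1
      exact integral_ofReal
    rw [hF1]
    have hrep := stmt5_rep ht0 ht1 (add_nonneg (ha j) (ha k))
    rw [show ((x j)^2 + (x k)^2 : ℝ) = a j + a k from rfl, hrep, ← hI1_def]
    rw [Complex.ofReal_mul, Complex.ofReal_inv]
    ring
  -- step 2: swap sum and integral
  have step2 : (∑ j, ∑ k, ∫ l in Ioi (0:ℝ), F j k l)
      = ∫ l in Ioi (0:ℝ), ∑ j, ∑ k, F j k l := by
    have inner : ∀ j : Fin n, (∑ k, ∫ l in Ioi (0:ℝ), F j k l) = ∫ l in Ioi (0:ℝ), ∑ k, F j k l :=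
      fun j => (integral_finset_sum _ (fun k _ => hFint j k)).symm
    rw [Finset.sum_congr rfl (fun j _ => inner j)]
    exact (integral_finset_sum _ (fun j _ => integrable_finset_sum _ (fun k _ => hFint j k))).symm
  -- step 3: pointwise identity
  set g : ℝ → ℂ := fun l => ∑ j, c j * ((Real.exp (-(a j * l)) : ℝ) : ℂ) with hg_def
  have step3 : ∀ l : ℝ, (∑ j, ∑ k, F j k l)
      = -(((Complex.normSq (g l)) * l ^ (-t - 1) : ℝ) : ℂ) := by
    intro l
    have hexp : ∀ j k : Fin n, ((Real.exp (-((a j + a k) * l)) : ℝ) : ℂ)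
        = ((Real.exp (-(a j * l)) : ℝ) : ℂ) * ((Real.exp (-(a k * l)) : ℝ) : ℂ) := by
      intro j k
      rw [← Complex.ofReal_mul, ← Real.exp_add]
      congr 2
      ring
    set E : Fin n → ℂ := fun j => ((Real.exp (-(a j * l)) : ℝ) : ℂ) with hE_def
    set L : ℂ := ((l ^ (-t - 1) : ℝ) : ℂ) with hL_def
    have key : (∑ j, ∑ k, F j k l)
        = (∑ j, c j) * ((∑ k, (starRingEnd ℂ) (c k)) * L)
          - (∑ j, c j * E j) * ((∑ k, (starRingEnd ℂ) (c k) * E k) * L) :=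
      calc (∑ j, ∑ k, F j k l)
          = ∑ j, ∑ k, (c j * ((starRingEnd ℂ) (c k) * L)
              - (c j * E j) * (((starRingEnd ℂ) (c k) * E k) * L)) := by
            refine Finset.sum_congr rfl fun j _ => Finset.sum_congr rfl fun k _ => ?_
            rw [hF_def]
            simp only
            rw [Complex.ofReal_mul, Complex.ofReal_sub, Complex.ofReal_one, hexp j k]
            rw [hE_def, hL_def]
            simp only
            ring
        _ = ∑ j, (c j * ((∑ k, (starRingEnd ℂ) (c k)) * L)
              - (c j * E j) * ((∑ k, (starRingEnd ℂ) (c k) * E k) * L)) := by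
            refine Finset.sum_congr rfl fun j _ => ?_
            rw [Finset.sum_sub_distrib, ← Finset.mul_sum, ← Finset.mul_sum,
              ← Finset.sum_mul, ← Finset.sum_mul]
        _ = (∑ j, c j) * ((∑ k, (starRingEnd ℂ) (c k)) * L)
              - (∑ j, c j * E j) * ((∑ k, (starRingEnd ℂ) (c k) * E k) * L) := by
            rw [Finset.sum_sub_distrib, ← Finset.sum_mul, ← Finset.sum_mul]
    have hconjsum : (∑ k, (starRingEnd ℂ) (c k)) = 0 := by
      rw [← map_sum, hc, map_zero]
    have hconjg : (∑ k, (starRingEnd ℂ) (c k) * E k) = (starRingEnd ℂ) (g l) := by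
      rw [hg_def, map_sum]
      apply Finset.sum_congr rfl; intro k _
      rw [map_mul, Complex.conj_ofReal]
    rw [key, hc, hconjsum, hconjg]
    rw [Complex.ofReal_mul]
    rw [show (g l) * ((starRingEnd ℂ) (g l) * L) = (g l) * (starRingEnd ℂ) (g l) * L by ring]
    rw [Complex.mul_conj]
    ring
  -- step 4: conclude
  rw [step1, step2]
  rw [setIntegral_congr_fun measurableSet_Ioi (fun l _ => step3 l)]
  have hcast2 : ∫ l in Ioi (0:ℝ), (((Complex.normSq (g l)) * l ^ (-t - 1) : ℝ) : ℂ)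
      = ((∫ l in Ioi (0:ℝ), (Complex.normSq (g l)) * l ^ (-t - 1) : ℝ) : ℂ) := integral_ofReal
  rw [integral_neg, hcast2]
  have hR : 0 ≤ ∫ l in Ioi (0:ℝ), (Complex.normSq (g l)) * l ^ (-t - 1) := by
    apply setIntegral_nonneg measurableSet_Ioi
    intro l hl
    exact mul_nonneg (Complex.normSq_nonneg _) (Real.rpow_nonneg (le_of_lt hl) _)
  rw [show ((I1 : ℂ))⁻¹ * -((∫ l in Ioi (0:ℝ), (Complex.normSq (g l)) * l ^ (-t - 1) : ℝ) : ℂ)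
      = ((-(I1⁻¹ * ∫ l in Ioi (0:ℝ), (Complex.normSq (g l)) * l ^ (-t - 1)) : ℝ) : ℂ) by push_cast; ring]
  rw [show (0:ℂ) = ((0:ℝ):ℂ) from rfl, Complex.real_le_real]
  have : 0 ≤ I1⁻¹ * ∫ l in Ioi (0:ℝ), (Complex.normSq (g l)) * l ^ (-t - 1) :=
    mul_nonneg (inv_nonneg.2 hI1.le) hR
  linarith



/-- For `0 < t ≤ 1`, the kernel `(x,y) ↦ (x²+y²)^t` is conditionally
negative-definite on `ℝ × ℝ`: it is symmetric, and for all `n ≥ 2`, all `x ∈ ℝⁿ` and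
`c ∈ ℂⁿ` with `∑ c_j = 0`, `∑_{j,k} c_j conj(c_k) (x_j² + x_k²)^t ≤ 0`. -/
theorem stmt5 (t : ℝ) (ht0 : 0 < t) (ht1 : t ≤ 1) :
    (∀ x y : ℝ, ((x ^ 2 + y ^ 2 : ℝ) ^ t) = ((y ^ 2 + x ^ 2 : ℝ) ^ t)) ∧
    (∀ (n : ℕ), 2 ≤ n → ∀ (x : Fin n → ℝ) (c : Fin n → ℂ), (∑ j, c j) = 0 →
      (∑ j, ∑ k, c j * (starRingEnd ℂ) (c k) *
        ((((x j) ^ 2 + (x k) ^ 2 : ℝ) ^ t : ℝ) : ℂ)) ≤ 0) := by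
  constructor
  · intro x y; rw [add_comm]
  · intro n _ x c hc
    rcases eq_or_lt_of_le ht1 with h1 | h1
    · -- t = 1
      subst h1
      have : (∑ j, ∑ k, c j * (starRingEnd ℂ) (c k) *
          ((((x j) ^ 2 + (x k) ^ 2 : ℝ) ^ (1:ℝ) : ℝ) : ℂ)) = 0 := by
        have hterm : ∀ j k : Fin n, c j * (starRingEnd ℂ) (c k) *
            ((((x j) ^ 2 + (x k) ^ 2 : ℝ) ^ (1:ℝ) : ℝ) : ℂ)
            = c j * ((x j)^2 : ℂ) * (starRingEnd ℂ) (c k)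
              + c j * ((starRingEnd ℂ) (c k) * ((x k)^2 : ℂ)) := by
          intro j k
          rw [Real.rpow_one]
          push_cast
          ring
        simp only [hterm, Finset.sum_add_distrib, ← Finset.sum_mul, ← Finset.mul_sum]
        have hconj : (∑ k, (starRingEnd ℂ) (c k)) = 0 := by
          rw [← map_sum, hc, map_zero]
        rw [hc, hconj]
        ring
      rw [this]
    · exact stmt5_main ht0 h1 x c hc
end

section
/- Fix t > 0 and a > 0, and define g(z; t, a) = (1 + z)² − 1 + 2a·z^t·((1 + z) − 2^{t−1}) + a²·z^{2t} for z ≥ 0. If the kernel K_{t,a}(x, y) = (1/π) · 1/(1 + (x − y)² + a(x² + y²)^t) is a positive-definite kernel on ℝ × ℝ, then g(z; t, a) ≥ 0 for every z ≥ 0. -/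
open Finset ComplexOrder

/-- Fix `t > 0`, `a > 0`, and define
`g(z; t, a) = (1+z)² − 1 + 2a z^t ((1+z) − 2^{t−1}) + a² z^{2t}`.
If `K_{t,a}` is a positive-definite kernel on `ℝ × ℝ`, then `g(z; t, a) ≥ 0` for all `z ≥ 0`. -/
theorem stmt6 (t a : ℝ) (ht : 0 < t) (ha : 0 < a)
    (hPD : ∀ (n : ℕ) (x : Fin n → ℝ) (c : Fin n → ℂ),
      0 ≤ ∑ j, ∑ k, c j * (starRingEnd ℂ) (c k) *
        (((1 / Real.pi) * (1 + (x j - x k) ^ 2 + a * ((x j) ^ 2 + (x k) ^ 2) ^ t) ⁻¹ : ℝ) : ℂ)) :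
    ∀ z : ℝ, 0 ≤ z →
      0 ≤ (1 + z) ^ 2 - 1 + 2 * a * z ^ t * ((1 + z) - 2 ^ (t - 1)) + a ^ 2 * z ^ (2 * t) := by
  intro z hz
  have hπ : 0 < Real.pi := Real.pi_pos
  set s : ℝ := Real.sqrt z with hsdef
  have hs : s ^ 2 = z := Real.sq_sqrt hz
  set A : ℝ := 1 / Real.pi * (1 + (s - s) ^ 2 + a * (s ^ 2 + s ^ 2) ^ t)⁻¹ with hAdef
  set B : ℝ := 1 / Real.pi * (1 + (s - 0) ^ 2 + a * (s ^ 2 + 0 ^ 2) ^ t)⁻¹ with hBdef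
  set C : ℝ := 1 / Real.pi * (1 + ((0:ℝ) - 0) ^ 2 + a * ((0:ℝ) ^ 2 + 0 ^ 2) ^ t)⁻¹ with hCdef
  have key := hPD 2 ![s, 0] ![(B : ℂ), -(A : ℂ)]
  simp only [Fin.sum_univ_two, Matrix.cons_val_zero, Matrix.cons_val_one, Matrix.head_cons,
    map_neg, Complex.conj_ofReal] at key
  have keyR : (0:ℝ) ≤
      B * B * (1 / Real.pi * (1 + (s - s) ^ 2 + a * (s ^ 2 + s ^ 2) ^ t)⁻¹)
      + B * -A * (1 / Real.pi * (1 + (s - 0) ^ 2 + a * (s ^ 2 + 0 ^ 2) ^ t)⁻¹)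
      + (-A * B * (1 / Real.pi * (1 + ((0:ℝ) - s) ^ 2 + a * ((0:ℝ) ^ 2 + s ^ 2) ^ t)⁻¹)
      + -A * -A * (1 / Real.pi * (1 + ((0:ℝ) - 0) ^ 2 + a * ((0:ℝ) ^ 2 + 0 ^ 2) ^ t)⁻¹)) := by
    exact_mod_cast key
  rw [show (1 / Real.pi * (1 + ((0:ℝ) - s) ^ 2 + a * ((0:ℝ) ^ 2 + s ^ 2) ^ t)⁻¹)
        = 1 / Real.pi * (1 + (s - 0) ^ 2 + a * (s ^ 2 + 0 ^ 2) ^ t)⁻¹ by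
      rw [show ((0:ℝ) - s) ^ 2 = (s - 0) ^ 2 by ring,
        show (0:ℝ) ^ 2 + s ^ 2 = s ^ 2 + 0 ^ 2 by ring]] at keyR
  rw [← hAdef, ← hBdef, ← hCdef] at keyR
  -- keyR : 0 ≤ B*B*A + B*(-A)*B + (-A*B*B + -A*-A*C), i.e. 0 ≤ A*(A*C - B^2)
  have h1 : (0:ℝ) < 1 + (s - s) ^ 2 + a * (s ^ 2 + s ^ 2) ^ t := by
    have := Real.rpow_nonneg (by positivity : (0:ℝ) ≤ s ^ 2 + s ^ 2) t
    nlinarith [sq_nonneg (s - s)]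
  have h2 : (0:ℝ) < 1 + (s - 0) ^ 2 + a * (s ^ 2 + 0 ^ 2) ^ t := by
    have := Real.rpow_nonneg (by positivity : (0:ℝ) ≤ s ^ 2 + 0 ^ 2) t
    nlinarith [sq_nonneg (s - 0)]
  have hA : 0 < A := by rw [hAdef]; positivity
  have hdet : 0 ≤ A * (A * C - B ^ 2) := by nlinarith [keyR]
  have hBA : B ^ 2 ≤ A * C := by nlinarith [hdet, hA, sq_nonneg (A * C - B ^ 2)]
  have hC1 : C = 1 / Real.pi := by
    rw [hCdef]; norm_num [Real.zero_rpow ht.ne']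
  have hAval : A = 1 / Real.pi * (1 + a * (2 ^ t * z ^ t))⁻¹ := by
    rw [hAdef, show s ^ 2 + s ^ 2 = 2 * z by rw [hs]; ring,
      Real.mul_rpow (by norm_num) hz, sub_self]
    norm_num
  have hBval : B = 1 / Real.pi * (1 + z + a * z ^ t)⁻¹ := by
    rw [hBdef, sub_zero, show s ^ 2 + (0:ℝ) ^ 2 = z by rw [hs]; ring, hs]
  rw [hAval, hBval, hC1] at hBA
  set D1 : ℝ := 1 + a * (2 ^ t * z ^ t) with hD1
  set D2 : ℝ := 1 + z + a * z ^ t with hD2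
  have hzt : (0:ℝ) ≤ z ^ t := Real.rpow_nonneg hz t
  have h2t : (0:ℝ) < 2 ^ t := Real.rpow_pos_of_pos (by norm_num) t
  have hD1pos : 0 < D1 := by
    have : (0:ℝ) ≤ a * (2 ^ t * z ^ t) := by positivity
    rw [hD1]; linarith
  have hD2pos : 0 < D2 := by
    have : (0:ℝ) ≤ a * z ^ t := by positivity
    rw [hD2]; linarith
  have h'' : (D2 ^ 2)⁻¹ ≤ D1⁻¹ := by
    have h3 := mul_le_mul_of_nonneg_left hBA (le_of_lt (by positivity : (0:ℝ) < Real.pi ^ 2))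
    have e1 : Real.pi ^ 2 * (1 / Real.pi * D2⁻¹) ^ 2 = (D2 ^ 2)⁻¹ := by
      field_simp
    have e2 : Real.pi ^ 2 * (1 / Real.pi * D1⁻¹ * (1 / Real.pi)) = D1⁻¹ := by
      field_simp
    rw [e1, e2] at h3
    exact h3
  have hfin : D1 ≤ D2 ^ 2 := by
    have h4 := mul_le_mul_of_nonneg_left h'' (by positivity : (0:ℝ) ≤ D1 * D2 ^ 2)
    have e1 : D1 * D2 ^ 2 * (D2 ^ 2)⁻¹ = D1 := by field_simp
    have e2 : D1 * D2 ^ 2 * D1⁻¹ = D2 ^ 2 := by field_simp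
    rw [e1, e2] at h4
    exact h4
  have hz2t : z ^ (2 * t) = (z ^ t) ^ 2 := by
    rw [mul_comm, Real.rpow_mul hz]
    norm_num
  have h2t1 : (2:ℝ) ^ t = 2 * 2 ^ (t - 1) := by
    rw [show t = (t - 1) + 1 by ring, Real.rpow_add (by norm_num), Real.rpow_one]
    ring_nf
  rw [hz2t]
  rw [hD1, hD2, h2t1] at hfin
  have expand : (1 + z) ^ 2 - 1 + 2 * a * z ^ t * ((1 + z) - 2 ^ (t - 1)) + a ^ 2 * (z ^ t) ^ 2
      = (1 + z + a * z ^ t) ^ 2 - (1 + a * (2 * 2 ^ (t - 1) * z ^ t)) := by ring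
  rw [expand]
  linarith [hfin]
end

section
/- Let t > 1, define ã_t(z) = (2^{t−1} − (1 + z)) / z^t for z > 0, and set z₀ = (2^{t−1} − 1)² / 2^t and a₀(t) = (2^{t²−1} + 2^{t²−t}) / (2^{t−1} − 1)^{2t−1}. Then ã_t is continuous and strictly decreasing on the interval (0, z₀), ã_t(z₀) = a₀(t), and the image of the interval (0, z₀) under ã_t is the interval (a₀(t), ∞). -/
/-- For `t > 1`, with `ã_t(z) = (2^{t−1} − (1+z))/z^t`,
`z₀ = (2^{t−1} − 1)²/2^t` and `a₀(t) = (2^{t²−1} + 2^{t²−t})/(2^{t−1} − 1)^{2t−1}`: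
`ã_t` is continuous and strictly decreasing on `(0, z₀)`, `ã_t(z₀) = a₀(t)`, and
`ã_t '' (0, z₀) = (a₀(t), ∞)`. -/
theorem stmt8 (t : ℝ) (ht : 1 < t)
    (atilde : ℝ → ℝ) (hatilde : ∀ z : ℝ, 0 < z → atilde z = ((2 : ℝ) ^ (t - 1) - (1 + z)) / z ^ t)
    (z₀ a₀ : ℝ) (hz₀ : z₀ = ((2 : ℝ) ^ (t - 1) - 1) ^ 2 / 2 ^ t)
    (ha₀ : a₀ = ((2 : ℝ) ^ (t ^ 2 - 1) + 2 ^ (t ^ 2 - t)) / ((2 : ℝ) ^ (t - 1) - 1) ^ (2 * t - 1)) :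
    ContinuousOn atilde (Set.Ioo 0 z₀) ∧
    StrictAntiOn atilde (Set.Ioo 0 z₀) ∧
    atilde z₀ = a₀ ∧
    atilde '' (Set.Ioo 0 z₀) = Set.Ioi a₀ := by
  have ht0 : (0:ℝ) < t := by linarith
  have hc1 : (1:ℝ) < 2 ^ (t-1) := by
    have := Real.one_lt_rpow_iff_of_pos (show (0:ℝ) < 2 by norm_num) (y := t - 1)
    exact this.mpr (Or.inl ⟨by norm_num, by linarith⟩)
  have hu : (0:ℝ) < 2 ^ (t-1) - 1 := by linarith
  have hcz : (2:ℝ) ^ (t-1) < 2 ^ t := by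
    exact Real.rpow_lt_rpow_left_iff (by norm_num) |>.mpr (by linarith)
  have h2t : (0:ℝ) < (2:ℝ) ^ t := Real.rpow_pos_of_pos (by norm_num) t
  have hz₀pos : 0 < z₀ := by rw [hz₀]; positivity
  have hz₀lt : z₀ < 2 ^ (t-1) - 1 := by
    rw [hz₀, div_lt_iff₀ h2t]
    nlinarith
  -- key strict inequality
  have hkey : ∀ x y : ℝ, 0 < x → x < y → y ≤ z₀ → atilde y < atilde x := by
    intro x y hx hxy hyz
    have hy : 0 < y := hx.trans hxy
    rw [hatilde x hx, hatilde y hy]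
    have hxt : 0 < x ^ t := Real.rpow_pos_of_pos hx t
    have hyt : 0 < y ^ t := Real.rpow_pos_of_pos hy t
    have hxyt : x ^ t < y ^ t := Real.rpow_lt_rpow hx.le hxy ht0
    have hnumx : 0 < 2 ^ (t-1) - (1 + x) := by linarith
    calc ((2:ℝ)^(t-1) - (1+y)) / y ^ t < ((2:ℝ)^(t-1) - (1+x)) / y ^ t :=
          div_lt_div_of_pos_right (by linarith) hyt
      _ < ((2:ℝ)^(t-1) - (1+x)) / x ^ t := div_lt_div_of_pos_left hnumx hxt hxyt
  -- the explicit formula function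
  set g : ℝ → ℝ := fun z => ((2 : ℝ) ^ (t - 1) - (1 + z)) / z ^ t with hg
  have hgcont : ContinuousOn g (Set.Ioi 0) := by
    intro x hx
    have h1 : ContinuousAt g x := by
      apply ContinuousAt.div
      · fun_prop
      · exact Real.continuousAt_rpow_const x t (Or.inl (ne_of_gt hx))
      · exact (Real.rpow_pos_of_pos hx t).ne'
    exact h1.continuousWithinAt
  have hcont : ContinuousOn atilde (Set.Ioo 0 z₀) := by
    apply ContinuousOn.congr (hgcont.mono (fun z hz => hz.1)) ?_
    intro z hz; exact hatilde z hz.1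
  -- value at z₀
  have hval : atilde z₀ = a₀ := by
    have hz0t : z₀ ^ t = ((2:ℝ)^(t-1) - 1) ^ (2*t) / 2 ^ (t^2) := by
      rw [hz₀, Real.div_rpow (by positivity) h2t.le]
      congr 1
      · rw [← Real.rpow_natCast ((2:ℝ)^(t-1) - 1) 2, ← Real.rpow_mul hu.le]
        norm_num
      · rw [← Real.rpow_mul (by norm_num : (0:ℝ) ≤ 2), pow_two]
    have hUpos : (0:ℝ) < ((2:ℝ)^(t-1) - 1) ^ (2*t) := Real.rpow_pos_of_pos hu _
    have hTpos : (0:ℝ) < (2:ℝ) ^ (t^2) := Real.rpow_pos_of_pos (by norm_num) _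
    have e1 : (2:ℝ) ^ (t^2 - 1) = 2 ^ (t^2) / 2 := by
      rw [Real.rpow_sub (by norm_num), Real.rpow_one]
    have e2 : (2:ℝ) ^ (t^2 - t) = 2 ^ (t^2) / 2 ^ t := by
      rw [Real.rpow_sub (by norm_num)]
    have e3 : ((2:ℝ)^(t-1) - 1) ^ (2*t - 1)
        = ((2:ℝ)^(t-1) - 1) ^ (2*t) / ((2:ℝ)^(t-1) - 1) := by
      rw [Real.rpow_sub hu, Real.rpow_one]
    have e4 : (2:ℝ) ^ t = 2 * 2 ^ (t-1) := by
      rw [Real.rpow_sub (by norm_num), Real.rpow_one]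
      field_simp
    rw [hatilde z₀ hz₀pos, ha₀, hz0t, e1, e2, e3, hz₀, e4]
    field_simp
    ring
  -- image ⊆ Ioi a₀
  have himright : ∀ z ∈ Set.Ioo 0 z₀, a₀ < atilde z := by
    intro z hz
    rw [← hval]
    exact hkey z z₀ hz.1 hz.2 le_rfl
  refine ⟨hcont, fun x hx y hy hxy => hkey x y hx.1 hxy hy.2.le, hval, ?_⟩
  apply Set.Subset.antisymm
  · rintro _ ⟨z, hz, rfl⟩
    exact himright z hz
  · -- given y > a₀, find a preimage
    intro y hy
    -- atilde blows up near 0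
    have hlim : Filter.Tendsto g (nhdsWithin 0 (Set.Ioi 0)) Filter.atTop := by
      have h1 : Filter.Tendsto (fun z : ℝ => (z⁻¹) ^ t) (nhdsWithin 0 (Set.Ioi 0))
          Filter.atTop := (tendsto_rpow_atTop ht0).comp tendsto_inv_nhdsGT_zero
      have h2 : Filter.Tendsto (fun z : ℝ => (2:ℝ)^(t-1) - (1 + z)) (nhdsWithin 0 (Set.Ioi 0))
          (nhds ((2:ℝ)^(t-1) - 1)) := by
        have : Filter.Tendsto (fun z : ℝ => (2:ℝ)^(t-1) - (1 + z)) (nhds 0)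
            (nhds ((2:ℝ)^(t-1) - (1 + 0))) :=
          Filter.Tendsto.const_sub _ (Filter.Tendsto.const_add _ Filter.tendsto_id)
        simpa using this.mono_left nhdsWithin_le_nhds
      have h3 := Filter.Tendsto.pos_mul_atTop hu h2 h1
      apply h3.congr'
      filter_upwards [self_mem_nhdsWithin] with z hz
      rw [Real.inv_rpow (le_of_lt hz)]
      rw [hg]
      simp [div_eq_mul_inv]
    have hev : ∀ᶠ z in nhdsWithin 0 (Set.Ioi 0), y < g z ∧ z ∈ Set.Ioo 0 z₀ := by
      filter_upwards [hlim.eventually_gt_atTop y,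
        Ioo_mem_nhdsGT_of_mem (show (0:ℝ) ∈ Set.Ico 0 z₀ from ⟨le_refl 0, hz₀pos⟩)]
        with z h1 h2
      exact ⟨h1, h2⟩
    obtain ⟨z1, hz1y, hz1⟩ := hev.exists
    have hz1y' : y < atilde z1 := by rwa [hatilde z1 hz1.1]
    -- IVT on [z1, z₀]
    have hconIcc : ContinuousOn atilde (Set.Icc z1 z₀) := by
      apply ContinuousOn.congr (hgcont.mono ?_) ?_
      · intro z hz; exact lt_of_lt_of_le hz1.1 hz.1
      · intro z hz; exact hatilde z (lt_of_lt_of_le hz1.1 hz.1)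
    have hivt := intermediate_value_Icc' (le_of_lt hz1.2) hconIcc
    have hyIcc : y ∈ Set.Icc (atilde z₀) (atilde z1) := ⟨by rw [hval]; exact le_of_lt hy,
      le_of_lt hz1y'⟩
    obtain ⟨z, hzmem, hzy⟩ := hivt hyIcc
    refine ⟨z, ⟨lt_of_lt_of_le hz1.1 hzmem.1, ?_⟩, hzy⟩
    rcases lt_or_eq_of_le hzmem.2 with h | h
    · exact h
    · exfalso
      rw [h, hval] at hzy
      exact absurd hzy (ne_of_gt hy).symm
end

section
/- Fix n ∈ ℕ and fix an integer m with 0 ≤ m ≤ n² − 1. Suppose y₁, …, yₙ ∈ ℝ and c₁, …, cₙ ∈ ℝ satisfy ∑_{j=1}^n c_j · y_j^ℓ = 0 for every integer ℓ with 0 ≤ ℓ ≤ m. Then the coefficient of z^m in the polynomial (in the variable z) P(z) = ∑_{j=1}^n ∑_{k=1}^n c_j · c_k · ∏_{(p,q) ∈ {1,…,n}² \ {(j,k)}} (1 + (y_p − y_q)²·z) is zero. -/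
open Finset Polynomial

private lemma coeff_cofactor (w : ℝ) (R : Polynomial ℝ) (m : ℕ) :
    R.coeff m = ∑ t ∈ Finset.range (m + 1),
      (-w) ^ t * ((1 + Polynomial.C w * Polynomial.X) * R).coeff (m - t) := by
  set Q := (1 + Polynomial.C w * Polynomial.X) * R with hQ
  induction m with
  | zero => simp [hQ, Polynomial.mul_coeff_zero]
  | succ m ih =>
      rw [Finset.sum_range_succ']
      have hpeel : ∑ t ∈ Finset.range (m + 1),
          (-w) ^ (t + 1) * Q.coeff (m + 1 - (t + 1))
          = -w * ∑ t ∈ Finset.range (m + 1), (-w) ^ t * Q.coeff (m - t) := by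
        rw [Finset.mul_sum]
        apply Finset.sum_congr rfl
        intro t _
        have : m + 1 - (t + 1) = m - t := by omega
        rw [this, pow_succ]
        ring
      have hQm : Q.coeff (m + 1) = R.coeff (m + 1) + w * R.coeff m := by
        rw [hQ, add_mul, one_mul, Polynomial.coeff_add, mul_assoc,
          Polynomial.coeff_C_mul, Polynomial.coeff_X_mul]
      rw [hpeel, ← ih]
      simp only [Nat.sub_zero, pow_zero, one_mul]
      rw [hQm]
      ring

private lemma sumA (n m : ℕ) (y c : Fin n → ℝ)
    (hmom : ∀ ℓ : ℕ, ℓ ≤ m → ∑ j, c j * y j ^ ℓ = 0)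
    (t : ℕ) (ht : t ≤ m) :
    ∑ j : Fin n, ∑ k : Fin n, c j * c k * ((y j - y k) ^ 2) ^ t = 0 := by
  have key : ∀ j k : Fin n, c j * c k * ((y j - y k) ^ 2) ^ t
      = ∑ i ∈ Finset.range (2 * t + 1),
        (c j * y j ^ i) * (c k * (-y k) ^ (2 * t - i)) * ((2 * t).choose i : ℝ) := by
    intro j k
    rw [← pow_mul, sub_eq_add_neg, add_pow, Finset.mul_sum]
    apply Finset.sum_congr rfl
    intro i _
    ring
  simp_rw [key]
  have hswap1 : ∀ j : Fin n, ∑ k : Fin n, ∑ i ∈ Finset.range (2 * t + 1),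
        (c j * y j ^ i) * (c k * (-y k) ^ (2 * t - i)) * ((2 * t).choose i : ℝ)
      = ∑ i ∈ Finset.range (2 * t + 1), ∑ k : Fin n,
        (c j * y j ^ i) * (c k * (-y k) ^ (2 * t - i)) * ((2 * t).choose i : ℝ) :=
    fun j => Finset.sum_comm
  rw [Finset.sum_congr rfl fun j _ => hswap1 j, Finset.sum_comm]
  apply Finset.sum_eq_zero
  intro i hi
  simp only [Finset.mem_range] at hi
  have factored : ∑ j : Fin n, ∑ k : Fin n,
      (c j * y j ^ i) * (c k * (-y k) ^ (2 * t - i)) * ((2 * t).choose i : ℝ)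
      = (∑ j : Fin n, c j * y j ^ i) * (∑ k : Fin n, c k * (-y k) ^ (2 * t - i))
        * ((2 * t).choose i : ℝ) := by
    rw [Finset.sum_mul_sum, Finset.sum_mul]
    refine Finset.sum_congr rfl fun j _ => ?_
    rw [Finset.sum_mul]
  rw [factored]
  by_cases hcase : i ≤ m
  · rw [hmom i hcase]
    ring
  · have he : 2 * t - i ≤ m := by omega
    have hg : ∑ k : Fin n, c k * (-y k) ^ (2 * t - i) = 0 := by
      have hk : ∀ k : Fin n, c k * (-y k) ^ (2 * t - i)
          = (-1 : ℝ) ^ (2 * t - i) * (c k * y k ^ (2 * t - i)) := by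
        intro k
        rw [neg_pow]
        ring
      rw [Finset.sum_congr rfl fun k _ => hk k, ← Finset.mul_sum, hmom _ he, mul_zero]
    rw [hg]
    ring

/-- Fix `n` and `0 ≤ m ≤ n² − 1`. If `y, c ∈ ℝⁿ` satisfy
`∑_j c_j y_j^ℓ = 0` for all `0 ≤ ℓ ≤ m`, then the coefficient of `z^m` in
`P(z) = ∑_{j,k} c_j c_k ∏_{(p,q) ≠ (j,k)} (1 + (y_p − y_q)² z)` is zero. -/
theorem stmt9 (n : ℕ) (m : ℕ) (hm : m ≤ n ^ 2 - 1)
    (y c : Fin n → ℝ)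
    (hmom : ∀ ℓ : ℕ, ℓ ≤ m → ∑ j, c j * y j ^ ℓ = 0) :
    (∑ j : Fin n, ∑ k : Fin n, Polynomial.C (c j * c k) *
      ∏ pq ∈ (Finset.univ : Finset (Fin n × Fin n)).erase (j, k),
        (1 + Polynomial.C ((y pq.1 - y pq.2) ^ 2) * Polynomial.X)).coeff m = 0 := by
  set f : Fin n × Fin n → Polynomial ℝ :=
    fun pq => 1 + Polynomial.C ((y pq.1 - y pq.2) ^ 2) * Polynomial.X with hf
  set Q : Polynomial ℝ := ∏ pq : Fin n × Fin n, f pq with hQ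
  have hcof : ∀ j k : Fin n,
      (∏ pq ∈ (Finset.univ : Finset (Fin n × Fin n)).erase (j, k), f pq).coeff m
      = ∑ t ∈ Finset.range (m + 1),
        (-((y j - y k) ^ 2)) ^ t * Q.coeff (m - t) := by
    intro j k
    have hprod : Q = (1 + Polynomial.C ((y j - y k) ^ 2) * Polynomial.X) *
        ∏ pq ∈ (Finset.univ : Finset (Fin n × Fin n)).erase (j, k), f pq := by
      rw [hQ, ← Finset.mul_prod_erase _ f (Finset.mem_univ (j, k))]
    rw [coeff_cofactor ((y j - y k) ^ 2)
      (∏ pq ∈ (Finset.univ : Finset (Fin n × Fin n)).erase (j, k), f pq) m, ← hprod]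
  rw [Polynomial.finset_sum_coeff]
  simp_rw [Polynomial.finset_sum_coeff, Polynomial.coeff_C_mul]
  rw [Finset.sum_congr rfl fun j _ => Finset.sum_congr rfl fun k _ => by rw [hcof j k]]
  have hswap1 : ∀ j : Fin n, ∑ k : Fin n, c j * c k *
        ∑ t ∈ Finset.range (m + 1), (-((y j - y k) ^ 2)) ^ t * Q.coeff (m - t)
      = ∑ t ∈ Finset.range (m + 1), ∑ k : Fin n,
        c j * c k * ((-((y j - y k) ^ 2)) ^ t * Q.coeff (m - t)) := by
    intro j
    rw [← Finset.sum_comm]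
    exact Finset.sum_congr rfl fun k _ => Finset.mul_sum _ _ _
  rw [Finset.sum_congr rfl fun j _ => hswap1 j, Finset.sum_comm]
  apply Finset.sum_eq_zero
  intro t htm
  simp only [Finset.mem_range] at htm
  have hterm : ∀ j k : Fin n,
      c j * c k * ((-((y j - y k) ^ 2)) ^ t * Q.coeff (m - t))
      = ((-1 : ℝ) ^ t * Q.coeff (m - t)) * (c j * c k * ((y j - y k) ^ 2) ^ t) := by
    intro j k
    rw [neg_pow]
    ring
  rw [Finset.sum_congr rfl fun j _ => Finset.sum_congr rfl fun k _ => hterm j k]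
  rw [Finset.sum_congr rfl fun j _ => (Finset.mul_sum _ _ _).symm, ← Finset.mul_sum]
  rw [sumA n m y c hmom t (by omega), mul_zero]
end

section
/- Let v be a nonnegative integer and n ∈ ℕ. If y₁, …, yₙ ∈ ℝ and c₁, …, cₙ ∈ ℝ satisfy ∑_{j=1}^n c_j · y_j^u = 0 for every integer u with 0 ≤ u ≤ v, then ∑_{j=1}^n ∑_{k=1}^n c_j · c_k · (y_j − y_k)^{2v} = 0. -/
open Finset

/-- If `∑_j c_j y_j^u = 0` for all `0 ≤ u ≤ v`, then
`∑_{j,k} c_j c_k (y_j − y_k)^{2v} = 0`. -/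
theorem stmt11 (v : ℕ) (n : ℕ) (y c : Fin n → ℝ)
    (hmom : ∀ u : ℕ, u ≤ v → ∑ j, c j * y j ^ u = 0) :
    ∑ j, ∑ k, c j * c k * (y j - y k) ^ (2 * v) = 0 := by
  have key : ∀ j k : Fin n, c j * c k * (y j - y k) ^ (2 * v)
      = ∑ i ∈ range (2 * v + 1),
        (c j * y j ^ i) * (c k * (-y k) ^ (2 * v - i)) * ((2 * v).choose i : ℝ) := by
    intro j k
    rw [sub_eq_add_neg, add_pow, mul_sum]
    exact sum_congr rfl fun i _ => by ring
  simp only [key]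
  rw [show (∑ j, ∑ k, ∑ i ∈ range (2 * v + 1),
        (c j * y j ^ i) * (c k * (-y k) ^ (2 * v - i)) * ((2 * v).choose i : ℝ))
      = ∑ i ∈ range (2 * v + 1), ∑ j, ∑ k,
        (c j * y j ^ i) * (c k * (-y k) ^ (2 * v - i)) * ((2 * v).choose i : ℝ) from
    (sum_congr rfl fun j _ => Finset.sum_comm).trans Finset.sum_comm]
  apply Finset.sum_eq_zero
  intro i hi
  have : ∑ j, ∑ k, (c j * y j ^ i) * (c k * (-y k) ^ (2 * v - i)) * ((2 * v).choose i : ℝ)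
      = (∑ j, c j * y j ^ i) * ((∑ k, c k * (-y k) ^ (2 * v - i)) * ((2 * v).choose i : ℝ)) := by
    rw [Finset.sum_mul]
    apply sum_congr rfl; intro j _
    conv_rhs => rw [Finset.sum_mul, Finset.mul_sum]
    apply sum_congr rfl; intro k _
    ring
  rw [this]
  rcases le_or_gt i v with h | h
  · rw [hmom i h, zero_mul]
  · have h2 : 2 * v - i ≤ v := by omega
    have : ∑ k, c k * (-y k) ^ (2 * v - i)
        = (-1 : ℝ) ^ (2 * v - i) * ∑ k, c k * y k ^ (2 * v - i) := by
      rw [mul_sum]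
      apply sum_congr rfl; intro k _
      rw [neg_pow]; ring
    rw [this, hmom _ h2, mul_zero, zero_mul, mul_zero]
end

section
/- Let T be a nonnegative integer and n ∈ ℕ. Suppose y₁, …, yₙ ∈ ℝ and c₁, …, cₙ ∈ ℝ satisfy ∑_{j=1}^n c_j · y_j^ℓ = 0 for every integer ℓ with 0 ≤ ℓ ≤ T. Then for every integer ℓ with 0 ≤ ℓ ≤ T, one has ∑_{j=1}^n ∑_{k=1}^n c_j · c_k · (y_j² + y_k²)^ℓ = 0. -/
open Finset

/-- If `∑_j c_j y_j^ℓ = 0` for all `0 ≤ ℓ ≤ T`, then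
`∑_{j,k} c_j c_k (y_j² + y_k²)^ℓ = 0` for all `0 ≤ ℓ ≤ T`. -/
theorem stmt13 (T : ℕ) (n : ℕ) (y c : Fin n → ℝ)
    (hmom : ∀ ℓ : ℕ, ℓ ≤ T → ∑ j, c j * y j ^ ℓ = 0) :
    ∀ ℓ : ℕ, ℓ ≤ T → ∑ j, ∑ k, c j * c k * ((y j) ^ 2 + (y k) ^ 2) ^ ℓ = 0 := by
  intro ℓ hℓ
  have key : ∀ i ∈ range (ℓ+1),
      (∑ j, c j * (y j ^ 2) ^ i) * (∑ k, c k * (y k ^ 2) ^ (ℓ - i)) = 0 := by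
    intro i hi
    simp only [mem_range, Nat.lt_succ_iff] at hi
    simp_rw [← pow_mul]
    rcases le_or_gt (2*i) T with h | h
    · rw [hmom (2*i) h, zero_mul]
    · have h2 : 2 * (ℓ - i) ≤ T := by omega
      rw [hmom (2*(ℓ-i)) h2, mul_zero]
  have expand : (∑ j, ∑ k, c j * c k * ((y j) ^ 2 + (y k) ^ 2) ^ ℓ)
      = ∑ i ∈ range (ℓ+1), (ℓ.choose i : ℝ) *
        ((∑ j, c j * (y j ^ 2) ^ i) * (∑ k, c k * (y k ^ 2) ^ (ℓ - i))) := by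
    simp_rw [add_pow, Finset.mul_sum, Finset.sum_mul]
    rw [Finset.sum_congr rfl fun j _ => Finset.sum_comm]
    rw [Finset.sum_comm]
    refine Finset.sum_congr rfl fun i _ => ?_
    rw [Finset.sum_comm]
    refine Finset.sum_congr rfl fun k _ => ?_
    rw [Finset.mul_sum]
    exact Finset.sum_congr rfl fun j _ => by ring
  rw [expand]
  exact Finset.sum_eq_zero fun i hi => by rw [key i hi, mul_zero]
end

section
/- Fix t > 0 with t not an integer, write t = T + τ where T = ⌊t⌋ is a nonnegative integer and τ ∈ (0, 1), and fix a > 0. Let n ∈ ℕ, y₁, …, yₙ ∈ ℝ, c₁, …, cₙ ∈ ℝ satisfy the moment conditions ∑_{j=1}^n c_j · y_j^ℓ = 0 for every integer ℓ with 0 ≤ ℓ ≤ T (where x^t for x ≥ 0 denotes the real power with the convention 0^t = 0). Then the quantity −a · ∑_{j=1}^n ∑_{k=1}^n c_j · c_k · (y_j² + y_k²)^t is nonnegative if T is even and nonpositive if T is odd. -/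
/-!
Let `R_T(w) = e^{-w} - ∑_{m ≤ T} (-w)^m / m!` be the Taylor remainder of `e^{-w}`. Since
`R_{T+1}' = -R_T`, induction shows that `(-1)^{T+1} R_T` is positive on `(0, ∞)`, and
`|R_T(w)| = O(w^{T+1})` at `0` while `R_T(w) = O(w^T)` at `∞`. Hence for `T < t < T + 1` the
integral `K = ∫_0^∞ R_T(u) u^{-t-1} du` converges, has sign `(-1)^{T+1}`, and substituting
`u ↦ s u` gives `s^t K = ∫_0^∞ R_T(s u) u^{-t-1} du` for every `s ≥ 0`.

Take `s = y_j² + y_k²` and sum against `c_j c_k`. Expanding `(y_j² + y_k²)^m` binomially, every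
term contains a factor `∑_j c_j y_j^{2i}` with `2i ≤ m ≤ T`, so the moment conditions kill the
Taylor polynomial part, and what is left is
`K ∑_{j,k} c_j c_k (y_j² + y_k²)^t = ∫_0^∞ (∑_j c_j e^{-y_j² u})² u^{-t-1} du ≥ 0`.
-/

open Finset Real MeasureTheory Set
open scoped Nat

section Scaling

variable {f : ℝ → ℝ} {r s : ℝ}

theorem rpow_eq_rpow_mul_mul_rpow (hs : 0 < s) {u : ℝ} (hu : 0 < u) :
    u ^ r = s ^ (-r) * (s * u) ^ r := by
  rw [mul_rpow hs.le hu.le, ← mul_assoc, ← rpow_add hs, neg_add_cancel, rpow_zero, one_mul]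

theorem integrableOn_comp_mul_mul_rpow_Ioi (hf0 : f 0 = 0) (hs : 0 ≤ s)
    (hf : IntegrableOn (fun u => f u * u ^ r) (Ioi 0)) :
    IntegrableOn (fun u => f (s * u) * u ^ r) (Ioi 0) := by
  rcases hs.eq_or_lt with rfl | hs
  · simp [hf0]
  · have h := ((integrableOn_Ioi_comp_mul_left_iff (fun v => f v * v ^ r) 0 hs).mpr
      (by rwa [mul_zero])).const_mul (s ^ (-r))
    refine IntegrableOn.congr_fun h (fun u (hu : 0 < u) => ?_) measurableSet_Ioi
    rw [rpow_eq_rpow_mul_mul_rpow hs hu]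
    ring

theorem integral_comp_mul_mul_rpow_Ioi (hf0 : f 0 = 0) (hr : r ≠ -1) (hs : 0 ≤ s) :
    ∫ u in Ioi 0, f (s * u) * u ^ r = s ^ (-r - 1) * ∫ u in Ioi 0, f u * u ^ r := by
  rcases hs.eq_or_lt with rfl | hs
  · rw [zero_rpow (by contrapose! hr; linarith)]
    simp [hf0]
  · rw [setIntegral_congr_fun measurableSet_Ioi fun u (hu : 0 < u) => by
      rw [rpow_eq_rpow_mul_mul_rpow hs hu, mul_left_comm], integral_const_mul,
      integral_comp_mul_left_Ioi (fun v => f v * v ^ r) 0 hs, mul_zero, smul_eq_mul, ← mul_assoc,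
      ← rpow_neg_one, ← rpow_add hs]
    ring_nf

end Scaling

noncomputable def expNegTaylorRemainder (T : ℕ) (w : ℝ) : ℝ :=
  exp (-w) - ∑ m ∈ range (T + 1), (-w) ^ m / m !

namespace expNegTaylorRemainder

@[simp]
theorem apply_zero (T : ℕ) : expNegTaylorRemainder T 0 = 0 := by
  simp [expNegTaylorRemainder, sum_range_succ']

theorem continuous (T : ℕ) : Continuous (expNegTaylorRemainder T) := by
  unfold expNegTaylorRemainder; fun_prop

theorem hasDerivAt_succ (T : ℕ) (w : ℝ) :
    HasDerivAt (expNegTaylorRemainder (T + 1)) (-expNegTaylorRemainder T w) w := by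
  have hterm : ∀ m : ℕ, HasDerivAt (fun w : ℝ => (-w) ^ (m + 1) / (m + 1)!)
      (-((-w) ^ m / m !)) w := fun m => by
    refine (((hasDerivAt_neg w).pow (m + 1)).div_const ((m + 1)! : ℝ)).congr_deriv ?_
    push_cast [Nat.factorial_succ, Nat.add_sub_cancel]
    field_simp
  have hpoly := (HasDerivAt.fun_sum fun m (_ : m ∈ range (T + 1)) => hterm m).const_add 1
  have hfun : expNegTaylorRemainder (T + 1)
      = fun v => exp (-v) - (1 + ∑ m ∈ range (T + 1), (-v) ^ (m + 1) / (m + 1)!) := by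
    ext v
    rw [expNegTaylorRemainder, sum_range_succ', pow_zero, Nat.factorial_zero, Nat.cast_one,
      div_one, add_comm]
  rw [hfun]
  refine ((hasDerivAt_neg w).exp.sub hpoly).congr_deriv ?_
  simp only [expNegTaylorRemainder, sum_neg_distrib]
  ring

theorem neg_one_pow_mul_pos (T : ℕ) {w : ℝ} (hw : 0 < w) :
    0 < (-1) ^ (T + 1) * expNegTaylorRemainder T w := by
  induction T generalizing w with
  | zero => simpa [expNegTaylorRemainder] using exp_lt_one_iff.mpr (neg_lt_zero.mpr hw)
  | succ T ih =>
    have hderiv : ∀ v, HasDerivAt (fun v => (-1) ^ (T + 2) * expNegTaylorRemainder (T + 1) v)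
        ((-1) ^ (T + 1) * expNegTaylorRemainder T v) v := fun v =>
      ((hasDerivAt_succ T v).const_mul ((-1 : ℝ) ^ (T + 2))).congr_deriv (by ring)
    have hmono : StrictMonoOn (fun v => (-1) ^ (T + 2) * expNegTaylorRemainder (T + 1) v)
        (Ici 0) := by
      refine strictMonoOn_of_deriv_pos (convex_Ici 0)
        (continuous_const.mul (continuous _)).continuousOn fun v hv => ?_
      rw [interior_Ici] at hv
      rw [(hderiv v).deriv]
      exact ih hv
    simpa using hmono self_mem_Ici hw.le hw

theorem abs_le_of_abs_le_one (T : ℕ) {w : ℝ} (hw : |w| ≤ 1) :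
    |expNegTaylorRemainder T w| ≤ |w| ^ (T + 1) * ((T + 2) / ((T + 1)! * (T + 1))) := by
  have h := Real.exp_bound (x := -w) (by rwa [abs_neg]) (n := T + 1) T.succ_pos
  rw [abs_neg] at h
  refine h.trans_eq ?_
  push_cast
  ring

theorem integrableOn_mul_rpow_Ioc {T : ℕ} {t : ℝ} (htT : t < T + 1) :
    IntegrableOn (fun u => expNegTaylorRemainder T u * u ^ (-t - 1)) (Ioc 0 1) := by
  set C : ℝ := (T + 2) / ((T + 1)! * (T + 1))
  have hdom : IntegrableOn (fun u : ℝ => C * u ^ ((T : ℝ) - t)) (Ioc 0 1) := by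
    have h := (intervalIntegral.intervalIntegrable_rpow' (a := 0) (b := 1)
      (r := (T : ℝ) - t) (by linarith)).const_mul C
    rwa [intervalIntegrable_iff_integrableOn_Ioc_of_le zero_le_one] at h
  refine hdom.mono' ?_ ((ae_restrict_iff' measurableSet_Ioc).mpr (.of_forall fun u hu => ?_))
  · exact ((continuous T).continuousOn.mul (continuousOn_id.rpow_const fun u hu =>
      Or.inl hu.1.ne')).aestronglyMeasurable measurableSet_Ioc
  · have hu0 : 0 < u := hu.1
    have hbound := abs_le_of_abs_le_one T (w := u) (by rw [abs_of_pos hu0]; exact hu.2)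
    rw [abs_of_pos hu0] at hbound
    have hpow : u ^ (T + 1) * u ^ (-t - 1) = u ^ ((T : ℝ) - t) := by
      rw [← rpow_natCast, ← rpow_add hu0]
      push_cast
      ring_nf
    calc ‖expNegTaylorRemainder T u * u ^ (-t - 1)‖
        = |expNegTaylorRemainder T u| * u ^ (-t - 1) := by
          rw [norm_mul, norm_eq_abs, norm_eq_abs, abs_of_nonneg (rpow_nonneg hu0.le _)]
      _ ≤ u ^ (T + 1) * C * u ^ (-t - 1) := by gcongr
      _ = C * u ^ ((T : ℝ) - t) := by rw [← hpow]; ring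

theorem integrableOn_mul_rpow_Ioi_one {T : ℕ} {t : ℝ} (hTt : T < t) :
    IntegrableOn (fun u => expNegTaylorRemainder T u * u ^ (-t - 1)) (Ioi 1) := by
  have hexp : IntegrableOn (fun u => exp (-u) * u ^ (-t - 1)) (Ioi 1) := by
    refine (exp_neg_integrableOn_Ioi 1 one_pos).mono' ?_
      ((ae_restrict_iff' measurableSet_Ioi).mpr (.of_forall fun u (hu : 1 < u) => ?_))
    · exact (continuous_exp.comp continuous_neg).continuousOn.mul (continuousOn_id.rpow_const
        fun u (hu : 1 < u) => Or.inl (by positivity)) |>.aestronglyMeasurable measurableSet_Ioi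
    · rw [norm_mul, norm_of_nonneg (exp_pos _).le, norm_of_nonneg (rpow_nonneg (by positivity) _),
        neg_one_mul]
      exact mul_le_of_le_one_right (exp_pos _).le
        (rpow_le_one_of_one_le_of_nonpos hu.le (by linarith))
  have hpoly : ∀ m ∈ range (T + 1), IntegrableOn
      (fun u : ℝ => (-1 : ℝ) ^ m / m ! * u ^ ((m : ℝ) - t - 1)) (Ioi 1) := fun m hm => by
    have hmT : (m : ℝ) ≤ T := by exact_mod_cast Nat.lt_succ_iff.mp (mem_range.mp hm)
    exact (integrableOn_Ioi_rpow_of_lt (by linarith) one_pos).const_mul _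
  refine (hexp.sub (integrable_finsetSum _ hpoly)).congr_fun (fun u (hu : 1 < u) => ?_)
    measurableSet_Ioi
  have hu0 : 0 < u := one_pos.trans hu
  simp only [expNegTaylorRemainder, sub_mul, sum_mul, Pi.sub_apply]
  congr 1
  refine sum_congr rfl fun m _ => ?_
  rw [sub_sub, sub_eq_add_neg, rpow_add hu0, rpow_natCast, neg_pow u, neg_add']
  ring

theorem integrableOn_mul_rpow {T : ℕ} {t : ℝ} (hTt : T < t) (htT : t < T + 1) :
    IntegrableOn (fun u => expNegTaylorRemainder T u * u ^ (-t - 1)) (Ioi 0) := by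
  rw [← Ioc_union_Ioi_eq_Ioi zero_le_one]
  exact (integrableOn_mul_rpow_Ioc htT).union (integrableOn_mul_rpow_Ioi_one hTt)

theorem neg_one_pow_mul_integral_mul_rpow_pos {T : ℕ} {t : ℝ} (hTt : T < t) (htT : t < T + 1) :
    0 < (-1) ^ (T + 1) * ∫ u in Ioi 0, expNegTaylorRemainder T u * u ^ (-t - 1) := by
  have hpos : ∀ u ∈ Ioi (0 : ℝ),
      0 < (-1) ^ (T + 1) * (expNegTaylorRemainder T u * u ^ (-t - 1)) := fun u hu => by
    rw [← mul_assoc]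
    exact mul_pos (neg_one_pow_mul_pos T hu) (rpow_pos_of_pos hu _)
  rw [← integral_const_mul, setIntegral_pos_iff_support_of_nonneg_ae
    ((ae_restrict_iff' measurableSet_Ioi).mpr (.of_forall fun u hu => (hpos u hu).le))
    ((integrableOn_mul_rpow hTt htT).const_mul _)]
  refine lt_of_lt_of_le ?_ (measure_mono fun u hu => ⟨(hpos u hu).ne', hu⟩)
  simp

end expNegTaylorRemainder

section Moments

variable {ι : Type*} [Fintype ι]

theorem sum_sum_mul_mul_add_pow_eq_zero {R : Type*} [CommRing R] (c x : ι → R) {T m : ℕ}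
    (hmom : ∀ i, 2 * i ≤ T → ∑ j, c j * x j ^ i = 0) (hm : m ≤ T) :
    ∑ j, ∑ k, c j * c k * (x j + x k) ^ m = 0 := by
  have hexpand : ∑ j, ∑ k, c j * c k * (x j + x k) ^ m = ∑ i ∈ range (m + 1),
      (m.choose i : R) * ((∑ j, c j * x j ^ i) * ∑ k, c k * x k ^ (m - i)) := by
    simp_rw [add_pow, sum_mul_sum, mul_sum]
    refine (sum_congr rfl fun j _ => sum_comm).trans (sum_comm.trans ?_)
    exact sum_congr rfl fun i _ => sum_congr rfl fun j _ => sum_congr rfl fun k _ => by ring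
  rw [hexpand]
  refine sum_eq_zero fun i hi => ?_
  have hi : i ≤ m := Nat.lt_succ_iff.mp (mem_range.mp hi)
  by_cases h : 2 * i ≤ T
  · rw [hmom i h, zero_mul, mul_zero]
  · rw [hmom (m - i) (by omega), mul_zero, mul_zero]

theorem sum_sum_mul_expNegTaylorRemainder (c x : ι → ℝ) {T : ℕ}
    (hmom : ∀ i, 2 * i ≤ T → ∑ j, c j * x j ^ i = 0) (u : ℝ) :
    ∑ j, ∑ k, c j * c k * expNegTaylorRemainder T ((x j + x k) * u)
      = (∑ j, c j * exp (-(x j * u))) ^ 2 := by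
  have htaylor :
      ∑ j, ∑ k, c j * c k * ∑ m ∈ range (T + 1), (-((x j + x k) * u)) ^ m / m ! = 0 := by
    calc _ = ∑ m ∈ range (T + 1), (-u) ^ m / m ! * ∑ j, ∑ k, c j * c k * (x j + x k) ^ m := by
          simp_rw [mul_sum]
          refine (sum_congr rfl fun j _ => sum_comm).trans (sum_comm.trans ?_)
          exact sum_congr rfl fun m _ => sum_congr rfl fun j _ => sum_congr rfl fun k _ => by
            rw [← mul_neg, mul_pow]
            ring
      _ = 0 := sum_eq_zero fun m hm => by
          rw [sum_sum_mul_mul_add_pow_eq_zero c x hmom (Nat.lt_succ_iff.mp (mem_range.mp hm)),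
            mul_zero]
  have hsq : (∑ j, c j * exp (-(x j * u))) ^ 2
      = ∑ j, ∑ k, c j * c k * exp (-((x j + x k) * u)) := by
    rw [sq, sum_mul_sum]
    refine sum_congr rfl fun j _ => sum_congr rfl fun k _ => ?_
    rw [mul_mul_mul_comm, ← exp_add]
    ring_nf
  simp only [expNegTaylorRemainder, mul_sub, sum_sub_distrib, htaylor, hsq, sub_zero]

theorem sum_sum_mul_add_rpow_mul_integral (c x : ι → ℝ) (hx : ∀ j, 0 ≤ x j) {T : ℕ} {t : ℝ}
    (hTt : T < t) (htT : t < T + 1) (hmom : ∀ i, 2 * i ≤ T → ∑ j, c j * x j ^ i = 0) :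
    (∑ j, ∑ k, c j * c k * (x j + x k) ^ t)
        * ∫ u in Ioi 0, expNegTaylorRemainder T u * u ^ (-t - 1)
      = ∫ u in Ioi 0, (∑ j, c j * exp (-(x j * u))) ^ 2 * u ^ (-t - 1) := by
  have hscale : ∀ j k, (x j + x k) ^ t * ∫ u in Ioi 0, expNegTaylorRemainder T u * u ^ (-t - 1)
      = ∫ u in Ioi 0, expNegTaylorRemainder T ((x j + x k) * u) * u ^ (-t - 1) := fun j k => by
    rw [integral_comp_mul_mul_rpow_Ioi (expNegTaylorRemainder.apply_zero T) (by linarith)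
      (add_nonneg (hx j) (hx k)), show -(-t - 1) - 1 = t by ring]
  have hint : ∀ j k, IntegrableOn (fun u => c j * c k
      * (expNegTaylorRemainder T ((x j + x k) * u) * u ^ (-t - 1))) (Ioi 0) := fun j k =>
    (integrableOn_comp_mul_mul_rpow_Ioi (expNegTaylorRemainder.apply_zero T)
      (add_nonneg (hx j) (hx k)) (expNegTaylorRemainder.integrableOn_mul_rpow hTt htT)).const_mul _
  calc _ = ∑ j, ∑ k, ∫ u in Ioi 0,
        c j * c k * (expNegTaylorRemainder T ((x j + x k) * u) * u ^ (-t - 1)) := by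
        simp_rw [sum_mul, mul_assoc, hscale, integral_const_mul]
    _ = ∫ u in Ioi 0, ∑ j, ∑ k,
        c j * c k * (expNegTaylorRemainder T ((x j + x k) * u) * u ^ (-t - 1)) := by
        rw [integral_finsetSum _ fun j _ => integrable_finsetSum _ fun k _ => hint j k]
        exact sum_congr rfl fun j _ => (integral_finsetSum _ fun k _ => hint j k).symm
    _ = _ := by
        simp_rw [← sum_sum_mul_expNegTaylorRemainder c x hmom, sum_mul, mul_assoc]

theorem neg_one_pow_mul_sum_sum_mul_add_rpow_nonneg (c x : ι → ℝ) (hx : ∀ j, 0 ≤ x j)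
    {T : ℕ} {t : ℝ} (hTt : T < t) (htT : t < T + 1)
    (hmom : ∀ i, 2 * i ≤ T → ∑ j, c j * x j ^ i = 0) :
    0 ≤ (-1) ^ (T + 1) * ∑ j, ∑ k, c j * c k * (x j + x k) ^ t := by
  set S := ∑ j, ∑ k, c j * c k * (x j + x k) ^ t
  set K := ∫ u in Ioi 0, expNegTaylorRemainder T u * u ^ (-t - 1)
  refine nonneg_of_mul_nonneg_left ?_
    (expNegTaylorRemainder.neg_one_pow_mul_integral_mul_rpow_pos hTt htT)
  have hsign : ((-1 : ℝ) ^ (T + 1)) * (-1) ^ (T + 1) = 1 := by rw [← mul_pow]; norm_num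
  calc 0 ≤ ∫ u in Ioi 0, (∑ j, c j * exp (-(x j * u))) ^ 2 * u ^ (-t - 1) :=
        setIntegral_nonneg measurableSet_Ioi fun u (hu : 0 < u) =>
          mul_nonneg (sq_nonneg _) (rpow_nonneg hu.le _)
    _ = S * K := (sum_sum_mul_add_rpow_mul_integral c x hx hTt htT hmom).symm
    _ = _ := by linear_combination -(S * K) * hsign

end Moments

theorem stmt14_general (t : ℝ) (T : ℕ) (τ : ℝ) (hτ : τ ∈ Set.Ioo (0 : ℝ) 1)
    (htsum : t = (T : ℝ) + τ) (a : ℝ) (ha : 0 < a)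
    (n : ℕ) (y c : Fin n → ℝ)
    (hmom : ∀ ℓ : ℕ, ℓ ≤ T → ∑ j, c j * y j ^ ℓ = 0) :
    (Even T → 0 ≤ -a * ∑ j, ∑ k, c j * c k * (((y j) ^ 2 + (y k) ^ 2 : ℝ) ^ t)) ∧
    (Odd T → -a * ∑ j, ∑ k, c j * c k * (((y j) ^ 2 + (y k) ^ 2 : ℝ) ^ t) ≤ 0) := by
  have hsign := neg_one_pow_mul_sum_sum_mul_add_rpow_nonneg c (fun j => y j ^ 2)
    (fun j => sq_nonneg _) (T := T) (t := t) (by linarith [hτ.1]) (by linarith [hτ.2])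
    (fun i hi => by simpa only [← pow_mul] using hmom (2 * i) hi)
  constructor
  · intro hT
    rw [hT.add_one.neg_one_pow] at hsign
    nlinarith
  · intro hT
    rw [hT.add_one.neg_one_pow] at hsign
    nlinarith

/-- Fix noninteger `t > 0`, written `t = T + τ` with `T = ⌊t⌋ ∈ ℕ ∪ {0}`
and `τ ∈ (0,1)`, and fix `a > 0`. If `y, c ∈ ℝⁿ` satisfy `∑_j c_j y_j^ℓ = 0` for all
`0 ≤ ℓ ≤ T`, then `−a ∑_{j,k} c_j c_k (y_j² + y_k²)^t` is nonnegative if `T` is even,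
and nonpositive if `T` is odd.  (Here `x ^ t` is the real power with `0 ^ t = 0`.) -/
theorem stmt14 (t : ℝ) (ht : 0 < t) (T : ℕ) (τ : ℝ) (hτ : τ ∈ Set.Ioo (0 : ℝ) 1)
    (htsum : t = (T : ℝ) + τ) (a : ℝ) (ha : 0 < a)
    (n : ℕ) (y c : Fin n → ℝ)
    (hmom : ∀ ℓ : ℕ, ℓ ≤ T → ∑ j, c j * y j ^ ℓ = 0) :
    (Even T → 0 ≤ -a * ∑ j, ∑ k, c j * c k * (((y j) ^ 2 + (y k) ^ 2 : ℝ) ^ t)) ∧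
    (Odd T → -a * ∑ j, ∑ k, c j * c k * (((y j) ^ 2 + (y k) ^ 2 : ℝ) ^ t) ≤ 0) :=
  stmt14_general t T τ hτ htsum a ha n y c hmom
end

section
/- Fix t > 0 with t not an integer, write t = T + τ where T = ⌊t⌋ is a nonnegative integer and τ ∈ (0, 1), and fix a > 0. Let n ∈ ℕ, y₁, …, yₙ ∈ ℝ, c₁, …, cₙ ∈ ℝ satisfy ∑_{j=1}^n c_j · y_j^ℓ = 0 for every integer ℓ with 0 ≤ ℓ ≤ T. Then −a · ∑_{j=1}^n ∑_{k=1}^n c_j · c_k · (y_j² + y_k²)^t = (−1)^T · a · (τ(τ+1)⋯(τ+T) / Γ(1 − τ)) · ∫₀^∞ ( ∑_{j=1}^n c_j · e^{−λ y_j²} )² · λ^{−(T + 1 + τ)} dλ, where the integral is with respect to Lebesgue measure on (0, ∞). -/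
/-!
Let `E_T(x) = e^{-x} - ∑_{m ≤ T} (-x)^m / m!`. The moment conditions make
`∑_{j,k} c_j c_k (y_j² + y_k²)^m` vanish for `m ≤ T`, so
`(∑_j c_j e^{-λ y_j²})² = ∑_{j,k} c_j c_k E_T((y_j² + y_k²) λ)`. The substitution
`u = (y_j² + y_k²) λ` turns the integral into `∑_{j,k} c_j c_k (y_j² + y_k²)^t · K_T` with
`K_T = ∫₀^∞ E_T(u) u^{-t-1} du`; this converges because `E_T(u) = O(u^{T+1})` at `0` and
`O(u^T)` at `∞`. Since `E_{T+1}' = -E_T`, integration by parts gives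
`K_{T+1} = -K_T / (T + 1 + τ)`, and `K_0 = -Γ(1 - τ) / τ`, so
`K_T = (-1)^{T+1} Γ(1 - τ) / (τ(τ+1)⋯(τ+T))`.
-/

open Finset MeasureTheory Set Filter Topology

open scoped Nat

noncomputable def expNegRemainder (T : ℕ) (x : ℝ) : ℝ :=
  Real.exp (-x) - ∑ m ∈ range (T + 1), (-x) ^ m / m !

lemma expNegRemainder_zero_left : expNegRemainder 0 = fun x => Real.exp (-x) - 1 := by
  ext x; simp [expNegRemainder]

lemma expNegRemainder_zero_right (T : ℕ) : expNegRemainder T 0 = 0 := by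
  simp [expNegRemainder, sum_range_succ']

lemma continuous_expNegRemainder (T : ℕ) : Continuous (expNegRemainder T) := by
  unfold expNegRemainder; fun_prop

lemma hasDerivAt_neg_pow_succ_div_factorial (m : ℕ) (x : ℝ) :
    HasDerivAt (fun x : ℝ => (-x) ^ (m + 1) / ((m + 1)! : ℝ)) (-((-x) ^ m / m !)) x := by
  refine (((hasDerivAt_pow (m + 1) (-x)).comp x (hasDerivAt_neg x)).div_const _).congr_deriv ?_
  rw [Nat.factorial_succ, Nat.add_sub_cancel]
  push_cast
  field_simp

lemma hasDerivAt_expNegRemainder_zero (x : ℝ) :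
    HasDerivAt (expNegRemainder 0) (-Real.exp (-x)) x := by
  rw [expNegRemainder_zero_left]
  simpa using ((hasDerivAt_neg x).exp).sub_const 1

lemma hasDerivAt_expNegRemainder_succ (T : ℕ) (x : ℝ) :
    HasDerivAt (expNegRemainder (T + 1)) (-expNegRemainder T x) x := by
  have hsum := HasDerivAt.fun_sum (u := range (T + 1))
    (fun m _ => hasDerivAt_neg_pow_succ_div_factorial m x)
  have hexp : HasDerivAt (fun x : ℝ => Real.exp (-x)) (-Real.exp (-x)) x := by
    simpa using (hasDerivAt_neg x).exp
  unfold expNegRemainder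
  simp only [sum_range_succ' _ (T + 1), pow_zero, Nat.factorial_zero, Nat.cast_one, div_one]
  refine (hexp.sub (hsum.add_const 1)).congr_deriv ?_
  rw [sum_neg_distrib]
  ring

lemma abs_expNegRemainder_le (T : ℕ) {x : ℝ} (hx : 0 ≤ x) :
    |expNegRemainder T x| ≤ Real.exp x * x ^ (T + 1) := by
  induction T generalizing x with
  | zero =>
    have hle : Real.exp (-x) ≤ 1 := Real.exp_le_one_iff.mpr (neg_nonpos.mpr hx)
    have hge : 1 - x ≤ Real.exp (-x) := by linarith [Real.add_one_le_exp (-x)]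
    rw [expNegRemainder_zero_left, abs_sub_comm, abs_of_nonneg (by linarith), zero_add, pow_one]
    nlinarith [Real.add_one_le_exp x]
  | succ T ih =>
    have hftc : ∫ s in (0 : ℝ)..x, -expNegRemainder T s = expNegRemainder (T + 1) x := by
      rw [intervalIntegral.integral_eq_sub_of_hasDerivAt
        (fun s _ => hasDerivAt_expNegRemainder_succ T s)
        ((continuous_expNegRemainder T).neg.intervalIntegrable 0 x),
        expNegRemainder_zero_right, sub_zero]
    have hbound : ∀ s ∈ uIoc 0 x, ‖-expNegRemainder T s‖ ≤ Real.exp x * x ^ (T + 1) := by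
      intro s hs
      rw [uIoc_of_le hx] at hs
      rw [norm_neg, Real.norm_eq_abs]
      calc |expNegRemainder T s| ≤ Real.exp s * s ^ (T + 1) := ih hs.1.le
        _ ≤ Real.exp x * x ^ (T + 1) := by have hs0 := hs.1.le; gcongr <;> exact hs.2
    have hnorm := intervalIntegral.norm_integral_le_of_norm_le_const hbound
    rw [hftc, Real.norm_eq_abs, sub_zero, abs_of_nonneg hx] at hnorm
    rwa [pow_succ, ← mul_assoc]

lemma abs_expNegRemainder_le_of_one_le (T : ℕ) {x : ℝ} (hx : 1 ≤ x) :
    |expNegRemainder T x| ≤ (T + 2) * x ^ T := by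
  have hexp : |Real.exp (-x)| ≤ x ^ T := by
    rw [abs_of_pos (Real.exp_pos _)]
    exact (Real.exp_le_one_iff.mpr (by linarith)).trans (one_le_pow₀ hx)
  have hterm : ∀ m ∈ range (T + 1), |(-x) ^ m / m !| ≤ x ^ T := by
    intro m hm
    rw [abs_div, abs_pow, abs_neg, abs_of_nonneg (by linarith), Nat.abs_cast]
    exact (div_le_self (by positivity) (by exact_mod_cast m.factorial_pos)).trans
      (pow_le_pow_right₀ hx (Nat.lt_succ_iff.mp (mem_range.mp hm)))
  calc |expNegRemainder T x|
      ≤ |Real.exp (-x)| + ∑ m ∈ range (T + 1), |(-x) ^ m / m !| :=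
        (abs_sub _ _).trans (add_le_add_right (abs_sum_le_sum_abs _ _) _)
    _ ≤ x ^ T + ∑ m ∈ range (T + 1), x ^ T := add_le_add hexp (sum_le_sum hterm)
    _ = (T + 2) * x ^ T := by rw [sum_const, card_range, nsmul_eq_mul]; push_cast; ring

lemma abs_mul_rpow_le {a C u : ℝ} {k : ℕ} (e : ℝ) (hu : 0 < u) (h : |a| ≤ C * u ^ k) :
    |a * u ^ e| ≤ C * u ^ (e + k) := by
  rw [abs_mul, abs_of_pos (Real.rpow_pos_of_pos hu e), Real.rpow_add_natCast hu.ne']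
  calc |a| * u ^ e ≤ C * u ^ k * u ^ e := by gcongr
    _ = C * (u ^ e * u ^ k) := by ring

lemma integrableOn_expNegRemainder_mul_rpow (T : ℕ) {e : ℝ} (h1 : -(T : ℝ) - 2 < e)
    (h2 : e < -(T : ℝ) - 1) :
    IntegrableOn (fun u => expNegRemainder T u * u ^ e) (Ioi 0) := by
  have hmeas : ∀ s ⊆ Ioi (0 : ℝ), MeasurableSet s →
      AEStronglyMeasurable (fun u => expNegRemainder T u * u ^ e) (volume.restrict s) :=
    fun s hs hsm => ((continuous_expNegRemainder T).continuousOn.mul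
      (continuousOn_id.rpow_const fun x hx => Or.inl (hs hx).ne')).aestronglyMeasurable hsm
  rw [← Ioc_union_Ioi_eq_Ioi zero_le_one]
  refine IntegrableOn.union ?_ ?_
  · have hdom : IntegrableOn (fun u : ℝ => Real.exp 1 * u ^ (e + (T + 1 : ℕ))) (Ioc 0 1) :=
      ((intervalIntegrable_iff_integrableOn_Ioc_of_le zero_le_one).mp
        (intervalIntegral.intervalIntegrable_rpow' (by push_cast; linarith))).const_mul _
    refine hdom.mono' (hmeas _ Ioc_subset_Ioi_self measurableSet_Ioc) ?_
    filter_upwards [ae_restrict_mem measurableSet_Ioc] with u ⟨hu0, hu1⟩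
    refine abs_mul_rpow_le e hu0 ((abs_expNegRemainder_le T hu0.le).trans ?_)
    gcongr
  · have hdom : IntegrableOn (fun u : ℝ => (T + 2) * u ^ (e + T)) (Ioi 1) :=
      ((integrableOn_Ioi_rpow_iff zero_lt_one).mpr (by linarith)).const_mul _
    refine hdom.mono' (hmeas _ (Ioi_subset_Ioi zero_le_one) measurableSet_Ioi) ?_
    filter_upwards [ae_restrict_mem measurableSet_Ioi] with u (hu : 1 < u)
    exact abs_mul_rpow_le e (one_pos.trans hu) (abs_expNegRemainder_le_of_one_le T hu.le)

lemma tendsto_expNegRemainder_mul_rpow_atTop (T : ℕ) {t : ℝ} (ht : (T : ℝ) < t) :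
    Tendsto (fun u => expNegRemainder T u * u ^ (-t)) atTop (𝓝 0) := by
  have hlim : Tendsto (fun u : ℝ => (T + 2) * u ^ (-t + T)) atTop (𝓝 0) := by
    simpa [neg_add_eq_sub] using
      (tendsto_rpow_neg_atTop (y := t - T) (by linarith)).const_mul ((T : ℝ) + 2)
  refine squeeze_zero_norm' ?_ hlim
  filter_upwards [eventually_ge_atTop (1 : ℝ)] with u hu
  exact abs_mul_rpow_le (-t) (one_pos.trans_le hu) (abs_expNegRemainder_le_of_one_le T hu)

lemma continuousWithinAt_expNegRemainder_mul_rpow_zero (T : ℕ) {t : ℝ} (ht : t < (T : ℝ) + 1) :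
    ContinuousWithinAt (fun u => expNegRemainder T u * u ^ (-t)) (Ici 0) 0 := by
  have hpos : 0 < -t + (T + 1 : ℕ) := by push_cast; linarith
  have hlim : Tendsto (fun u : ℝ => Real.exp u * u ^ (-t + (T + 1 : ℕ))) (𝓝 0) (𝓝 0) := by
    have := (Real.continuous_exp.tendsto 0).mul
      (Real.continuousAt_rpow_const 0 _ (Or.inr hpos.le)).tendsto
    rwa [Real.zero_rpow hpos.ne', mul_zero] at this
  rw [ContinuousWithinAt, expNegRemainder_zero_right, zero_mul]
  refine squeeze_zero_norm' ?_ (hlim.mono_left nhdsWithin_le_nhds)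
  filter_upwards [self_mem_nhdsWithin] with u (hu : 0 ≤ u)
  rcases hu.eq_or_lt with rfl | hu0
  · simp only [expNegRemainder_zero_right, zero_mul, norm_zero]
    positivity
  · exact abs_mul_rpow_le (-t) hu0 (abs_expNegRemainder_le T hu0.le)

lemma integral_Ioi_mul_rpow_neg_sub_one_of_hasDerivAt {F G : ℝ → ℝ} {t : ℝ} (ht : t ≠ 0)
    (hderiv : ∀ x ∈ Ioi (0 : ℝ), HasDerivAt F (-G x) x)
    (hzero : ContinuousWithinAt (fun u => F u * u ^ (-t)) (Ici 0) 0)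
    (hinfty : Tendsto (fun u => F u * u ^ (-t)) atTop (𝓝 0))
    (hG : IntegrableOn (fun u => G u * u ^ (-t)) (Ioi 0))
    (hF : IntegrableOn (fun u => F u * u ^ (-t - 1)) (Ioi 0)) :
    ∫ u in Ioi 0, F u * u ^ (-t - 1) = -(∫ u in Ioi 0, G u * u ^ (-t)) / t := by
  have hprod : ∀ x ∈ Ioi (0 : ℝ), HasDerivAt (fun u => F u * u ^ (-t))
      (-(G x * x ^ (-t)) + -t * (F x * x ^ (-t - 1))) x := fun x hx =>
    ((hderiv x hx).mul (Real.hasDerivAt_rpow_const (Or.inl (ne_of_gt hx)))).congr_deriv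
      (by ring)
  have h := integral_Ioi_of_hasDerivAt_of_tendsto hzero hprod (hG.neg.add (hF.const_mul _)) hinfty
  rw [integral_add (f := fun x => -(G x * x ^ (-t))) hG.neg (hF.const_mul _), integral_neg, integral_const_mul,
    Real.zero_rpow (neg_ne_zero.mpr ht), mul_zero, sub_zero] at h
  field_simp
  linarith

lemma integral_exp_neg_mul_rpow_neg {τ : ℝ} (hτ : τ < 1) :
    ∫ u in Ioi (0 : ℝ), Real.exp (-u) * u ^ (-τ) = Real.Gamma (1 - τ) := by
  rw [Real.Gamma_eq_integral (by linarith), sub_sub_cancel_left]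

lemma integral_expNegRemainder_mul_rpow {τ : ℝ} (hτ0 : 0 < τ) (hτ1 : τ < 1) (T : ℕ) :
    ∫ u in Ioi 0, expNegRemainder T u * u ^ (-((T : ℝ) + τ) - 1)
      = (-1) ^ (T + 1) * Real.Gamma (1 - τ) / ∏ i ∈ range (T + 1), (τ + i) := by
  induction T with
  | zero =>
    have hG : IntegrableOn (fun u => Real.exp (-u) * u ^ (-τ)) (Ioi 0) := by
      simpa [sub_sub_cancel_left] using Real.GammaIntegral_convergent (s := 1 - τ) (by linarith)
    rw [Nat.cast_zero, zero_add, integral_Ioi_mul_rpow_neg_sub_one_of_hasDerivAt hτ0.ne'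
      (fun x _ => hasDerivAt_expNegRemainder_zero x)
      (continuousWithinAt_expNegRemainder_mul_rpow_zero 0 (by simpa using hτ1))
      (tendsto_expNegRemainder_mul_rpow_atTop 0 (by simpa using hτ0)) hG
      (integrableOn_expNegRemainder_mul_rpow 0 (by simp; linarith) (by simp; linarith)),
      integral_exp_neg_mul_rpow_neg hτ1]
    simp [neg_div]
  | succ T ih =>
    have ht : (0 : ℝ) < T + 1 + τ := by positivity
    have hprod : ∏ i ∈ range (T + 1 + 1), (τ + i) = (∏ i ∈ range (T + 1), (τ + i)) * (T + 1 + τ) := by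
      rw [prod_range_succ]; push_cast; ring
    have hpos : 0 < ∏ i ∈ range (T + 1), (τ + i) := prod_pos fun i _ => by positivity
    rw [show -((T + 1 : ℕ) + τ) - 1 = -((T : ℝ) + 1 + τ) - 1 by push_cast; ring,
      integral_Ioi_mul_rpow_neg_sub_one_of_hasDerivAt ht.ne'
        (fun x _ => hasDerivAt_expNegRemainder_succ T x)
        (continuousWithinAt_expNegRemainder_mul_rpow_zero (T + 1) (by push_cast; linarith))
        (tendsto_expNegRemainder_mul_rpow_atTop (T + 1) (by push_cast; linarith))
        (integrableOn_expNegRemainder_mul_rpow T (by linarith) (by linarith))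
        (integrableOn_expNegRemainder_mul_rpow (T + 1) (by push_cast; linarith)
          (by push_cast; linarith)),
      show -((T : ℝ) + 1 + τ) = -((T : ℝ) + τ) - 1 by ring, ih, hprod, pow_succ]
    field_simp
    ring

section Scaling

variable {f : ℝ → ℝ} {s t : ℝ}

lemma comp_mul_mul_rpow_neg_sub_one_eq (hs : 0 < s) {l : ℝ} (hl : 0 < l) :
    f (s * l) * l ^ (-t - 1) = s ^ (t + 1) * (f (s * l) * (s * l) ^ (-t - 1)) := by
  have hcancel : s ^ (t + 1) * s ^ (-t - 1) = 1 := by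
    rw [← Real.rpow_add hs, show t + 1 + (-t - 1) = 0 by ring, Real.rpow_zero]
  rw [Real.mul_rpow hs.le hl.le]
  linear_combination (f (s * l) * l ^ (-t - 1)) * hcancel.symm

lemma integrableOn_Ioi_comp_mul_mul_rpow_neg_sub_one
    (hf : IntegrableOn (fun u => f u * u ^ (-t - 1)) (Ioi 0)) (hf0 : f 0 = 0) (hs : 0 ≤ s) :
    IntegrableOn (fun l => f (s * l) * l ^ (-t - 1)) (Ioi 0) := by
  rcases hs.eq_or_lt with rfl | hs
  · simp [hf0]
  · have h : IntegrableOn (fun l => s ^ (t + 1) * (f (s * l) * (s * l) ^ (-t - 1))) (Ioi 0) :=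
      ((integrableOn_Ioi_comp_mul_left_iff (fun u => f u * u ^ (-t - 1)) 0 hs).mpr
        (by rwa [mul_zero])).const_mul _
    exact h.congr_fun (fun l hl => (comp_mul_mul_rpow_neg_sub_one_eq hs hl).symm) measurableSet_Ioi

lemma integral_Ioi_comp_mul_mul_rpow_neg_sub_one (hf0 : f 0 = 0) (ht : 0 < t) (hs : 0 ≤ s) :
    ∫ l in Ioi 0, f (s * l) * l ^ (-t - 1) = s ^ t * ∫ u in Ioi 0, f u * u ^ (-t - 1) := by
  rcases hs.eq_or_lt with rfl | hs
  · simp [hf0, Real.zero_rpow ht.ne']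
  · rw [setIntegral_congr_fun measurableSet_Ioi fun l hl => comp_mul_mul_rpow_neg_sub_one_eq hs hl,
      integral_const_mul, integral_comp_mul_left_Ioi (fun u => f u * u ^ (-t - 1)) 0 hs, mul_zero,
      smul_eq_mul, ← mul_assoc, Real.rpow_add hs, Real.rpow_one, mul_inv_cancel_right₀ hs.ne']

end Scaling

section Moments

variable {ι : Type*} [Fintype ι] {T : ℕ} {y c : ι → ℝ}

lemma sum_sum_mul_mul_add_sq_pow_eq_zero (hmom : ∀ ℓ : ℕ, ℓ ≤ T → ∑ j, c j * y j ^ ℓ = 0)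
    {m : ℕ} (hm : m ≤ T) : ∑ j, ∑ k, c j * c k * (y j ^ 2 + y k ^ 2) ^ m = 0 := by
  have hexpand : ∑ j, ∑ k, c j * c k * (y j ^ 2 + y k ^ 2) ^ m = ∑ i ∈ range (m + 1),
      (∑ j, c j * y j ^ (2 * i)) * (∑ k, c k * y k ^ (2 * (m - i))) * m.choose i := by
    simp_rw [add_pow, mul_sum, sum_mul, sum_comm (s := univ) (t := range (m + 1)), ← pow_mul]
    refine sum_congr rfl fun i _ => ?_
    rw [sum_comm]
    refine sum_congr rfl fun j _ => sum_congr rfl fun k _ => ?_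
    ring
  rw [hexpand]
  -- `2i + 2(m - i) = 2m ≤ 2T`, so one of the two moments has order at most `T`.
  refine sum_eq_zero fun i hi => ?_
  rcases le_or_gt (2 * i) T with h | h
  · rw [hmom _ h, zero_mul, zero_mul]
  · rw [hmom (2 * (m - i)) (by have := mem_range.mp hi; omega), mul_zero, zero_mul]

lemma sq_sum_mul_exp_eq_sum_sum_expNegRemainder
    (hmom : ∀ ℓ : ℕ, ℓ ≤ T → ∑ j, c j * y j ^ ℓ = 0) (l : ℝ) :
    (∑ j, c j * Real.exp (-l * y j ^ 2)) ^ 2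
      = ∑ j, ∑ k, c j * c k * expNegRemainder T ((y j ^ 2 + y k ^ 2) * l) := by
  have hterm : ∀ j k, c j * c k * expNegRemainder T ((y j ^ 2 + y k ^ 2) * l)
      = c j * Real.exp (-l * y j ^ 2) * (c k * Real.exp (-l * y k ^ 2))
        - ∑ m ∈ range (T + 1), (-l) ^ m / m ! * (c j * c k * (y j ^ 2 + y k ^ 2) ^ m) := by
    intro j k
    rw [expNegRemainder, mul_sub, mul_sum, show -((y j ^ 2 + y k ^ 2) * l)
      = -l * y j ^ 2 + -l * y k ^ 2 by ring, Real.exp_add]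
    congr 1
    · ring
    · refine sum_congr rfl fun m _ => ?_
      rw [← mul_add, mul_pow]
      ring
  have htaylor : ∑ j, ∑ k, ∑ m ∈ range (T + 1),
      (-l) ^ m / m ! * (c j * c k * (y j ^ 2 + y k ^ 2) ^ m) = 0 := by
    simp_rw [sum_comm (s := univ) (t := range (T + 1)), ← mul_sum]
    exact sum_eq_zero fun m hm => by
      rw [sum_sum_mul_mul_add_sq_pow_eq_zero hmom (Nat.lt_succ_iff.mp (mem_range.mp hm)), mul_zero]
  simp_rw [hterm, sum_sub_distrib, htaylor, sub_zero, ← sum_mul_sum, sq]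

lemma integral_sq_sum_mul_exp_mul_rpow (hmom : ∀ ℓ : ℕ, ℓ ≤ T → ∑ j, c j * y j ^ ℓ = 0)
    {t : ℝ} (h1 : (T : ℝ) < t) (h2 : t < T + 1) :
    ∫ l in Ioi 0, (∑ j, c j * Real.exp (-l * y j ^ 2)) ^ 2 * l ^ (-t - 1)
      = (∑ j, ∑ k, c j * c k * (y j ^ 2 + y k ^ 2) ^ t)
        * ∫ u in Ioi 0, expNegRemainder T u * u ^ (-t - 1) := by
  have ht : 0 < t := (Nat.cast_nonneg T).trans_lt h1
  have hR : IntegrableOn (fun u => expNegRemainder T u * u ^ (-t - 1)) (Ioi 0) :=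
    integrableOn_expNegRemainder_mul_rpow T (by linarith) (by linarith)
  have hint : ∀ j k, IntegrableOn (fun l => c j * c k *
      (expNegRemainder T ((y j ^ 2 + y k ^ 2) * l) * l ^ (-t - 1))) (Ioi 0) := fun j k =>
    (integrableOn_Ioi_comp_mul_mul_rpow_neg_sub_one hR (expNegRemainder_zero_right T)
      (by positivity)).const_mul _
  calc ∫ l in Ioi 0, (∑ j, c j * Real.exp (-l * y j ^ 2)) ^ 2 * l ^ (-t - 1)
      = ∫ l in Ioi 0, ∑ j, ∑ k,
          c j * c k * (expNegRemainder T ((y j ^ 2 + y k ^ 2) * l) * l ^ (-t - 1)) := by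
        simp_rw [sq_sum_mul_exp_eq_sum_sum_expNegRemainder hmom, sum_mul, mul_assoc]
    _ = ∑ j, ∑ k, c j * c k * ((y j ^ 2 + y k ^ 2) ^ t
          * ∫ u in Ioi 0, expNegRemainder T u * u ^ (-t - 1)) := by
        rw [integral_finsetSum _ fun j _ => integrable_finsetSum _ fun k _ => hint j k]
        refine sum_congr rfl fun j _ => ?_
        rw [integral_finsetSum _ fun k _ => hint j k]
        refine sum_congr rfl fun k _ => ?_
        rw [integral_const_mul, integral_Ioi_comp_mul_mul_rpow_neg_sub_one
          (expNegRemainder_zero_right T) ht (by positivity)]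
    _ = _ := by simp_rw [sum_mul, mul_assoc]

end Moments

theorem stmt15_general (t : ℝ) (T : ℕ) (τ : ℝ) (hτ : τ ∈ Set.Ioo (0 : ℝ) 1)
    (htsum : t = (T : ℝ) + τ) (a : ℝ)
    (n : ℕ) (y c : Fin n → ℝ)
    (hmom : ∀ ℓ : ℕ, ℓ ≤ T → ∑ j, c j * y j ^ ℓ = 0) :
    -a * ∑ j, ∑ k, c j * c k * (((y j) ^ 2 + (y k) ^ 2 : ℝ) ^ t)
      = (-1 : ℝ) ^ T * a * ((∏ i ∈ Finset.range (T + 1), (τ + i)) / Real.Gamma (1 - τ)) *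
        ∫ l in Set.Ioi (0 : ℝ),
          (∑ j, c j * Real.exp (-l * (y j) ^ 2)) ^ 2 * l ^ (-((T : ℝ) + 1 + τ)) := by
  obtain ⟨hτ0, hτ1⟩ := hτ
  have hΓ : Real.Gamma (1 - τ) ≠ 0 := (Real.Gamma_pos_of_pos (by linarith)).ne'
  have hP : ∏ i ∈ range (T + 1), (τ + i) ≠ 0 := (prod_pos fun i _ => by positivity).ne'
  have hsign : ((-1 : ℝ) ^ T) ^ 2 = 1 := by rw [← pow_mul, pow_mul', neg_one_sq, one_pow]
  rw [show -((T : ℝ) + 1 + τ) = -t - 1 by rw [htsum]; ring,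
    integral_sq_sum_mul_exp_mul_rpow hmom (by linarith) (by linarith), htsum,
    integral_expNegRemainder_mul_rpow hτ0 hτ1 T, pow_succ]
  field_simp
  rw [hsign, mul_one]

/-- Fix noninteger `t > 0` written `t = T + τ`, `T = ⌊t⌋`, `τ ∈ (0,1)`,
and `a > 0`. If `∑_j c_j y_j^ℓ = 0` for all `0 ≤ ℓ ≤ T`, then
`−a ∑_{j,k} c_j c_k (y_j² + y_k²)^t
 = (−1)^T a (τ(τ+1)⋯(τ+T)/Γ(1−τ)) ∫₀^∞ (∑_j c_j e^{−λ y_j²})² λ^{−(T+1+τ)} dλ`. -/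
theorem stmt15 (t : ℝ) (ht : 0 < t) (T : ℕ) (τ : ℝ) (hτ : τ ∈ Set.Ioo (0 : ℝ) 1)
    (htsum : t = (T : ℝ) + τ) (a : ℝ) (ha : 0 < a)
    (n : ℕ) (y c : Fin n → ℝ)
    (hmom : ∀ ℓ : ℕ, ℓ ≤ T → ∑ j, c j * y j ^ ℓ = 0) :
    -a * ∑ j, ∑ k, c j * c k * (((y j) ^ 2 + (y k) ^ 2 : ℝ) ^ t)
      = (-1 : ℝ) ^ T * a * ((∏ i ∈ Finset.range (T + 1), (τ + i)) / Real.Gamma (1 - τ)) *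
        ∫ l in Set.Ioi (0 : ℝ),
          (∑ j, c j * Real.exp (-l * (y j) ^ 2)) ^ 2 * l ^ (-((T : ℝ) + 1 + τ)) :=
  stmt15_general t T τ hτ htsum a n y c hmom
end

section
/- Let s > 0 be a real number that is not an integer, and write s = S + σ where S is a nonnegative integer and σ ∈ (0, 1). Then there is a constant C(s) depending only on s (one may take C(s) = e / min(σ, 1 − σ) + 1/s) such that for every complex number w with Re(w) ≥ 0, ∫₀^∞ | ( ∑_{ℓ=0}^{S} (−λw)^ℓ / ℓ! ) − e^{−λw} | · λ^{−(S + 1 + σ)} dλ ≤ C(s) · |w|^s, where the integral is with respect to Lebesgue measure on (0, ∞). -/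
open Finset MeasureTheory Set

/-!
Write `expRemainder n z = exp z - ∑_{ℓ < n} z^ℓ/ℓ!`. Since `|exp z| ≤ 1` for `Re z ≤ 0` and
`expRemainder (n + 1)` has derivative `expRemainder n`, the mean value inequality on `[0, z]` gives
`‖expRemainder n z‖ ≤ ‖z‖^n / n!` by induction on `n`. The integral is homogeneous of degree `s`
in `w` (substitute `λ ↦ λ / ‖w‖`), so we may take `‖w‖ = 1`. Splitting at `λ = 1`, bound the
remainder by `λ^(S+1)/(S+1)!` on `(0, 1]` and by `1 + ∑_{ℓ ≤ S} λ^ℓ/ℓ!` on `(1, ∞)`; the resulting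
power integrals sum to `1/s + ∑_{ℓ ≤ S+1} 1/(ℓ! |s - ℓ|)`, and `|s - ℓ| ≥ min(σ, 1 - σ)` together
with `∑ 1/ℓ! ≤ e` bounds this by `C(s)`.
-/

noncomputable def expRemainder (n : ℕ) (z : ℂ) : ℂ :=
  Complex.exp z - ∑ ℓ ∈ range n, z ^ ℓ / (Nat.factorial ℓ : ℂ)

@[fun_prop]
lemma continuous_expRemainder (n : ℕ) : Continuous (expRemainder n) := by
  unfold expRemainder; fun_prop

lemma hasDerivAt_pow_succ_div_factorial {𝕜 : Type*} [NontriviallyNormedField 𝕜] [CharZero 𝕜]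
    (n : ℕ) (x : 𝕜) :
    HasDerivAt (fun x => x ^ (n + 1) / ((n + 1).factorial : 𝕜)) (x ^ n / (n.factorial : 𝕜)) x :=
  ((hasDerivAt_pow (n + 1) x).div_const _).congr_deriv <| by
    rw [Nat.factorial_succ, Nat.cast_mul, Nat.add_sub_cancel]
    field_simp

lemma hasDerivAt_sum_range_pow_div_factorial (n : ℕ) (z : ℂ) :
    HasDerivAt (fun z : ℂ => ∑ ℓ ∈ range (n + 1), z ^ ℓ / (Nat.factorial ℓ : ℂ))
      (∑ ℓ ∈ range n, z ^ ℓ / (Nat.factorial ℓ : ℂ)) z := by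
  induction n with
  | zero => simpa using hasDerivAt_const z (1 : ℂ)
  | succ n ih =>
    simpa only [← sum_range_succ, Pi.add_def] using ih.add (hasDerivAt_pow_succ_div_factorial n z)

lemma hasDerivAt_expRemainder (n : ℕ) (z : ℂ) :
    HasDerivAt (expRemainder (n + 1)) (expRemainder n z) z :=
  (Complex.hasDerivAt_exp z).sub (hasDerivAt_sum_range_pow_div_factorial n z)

lemma norm_expRemainder_le {z : ℂ} (hz : z.re ≤ 0) (n : ℕ) :
    ‖expRemainder n z‖ ≤ ‖z‖ ^ n / (Nat.factorial n) := by
  induction n generalizing z with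
  | zero => simpa [expRemainder, Complex.norm_exp] using hz
  | succ n ih =>
    have hf : ∀ x : ℝ, HasDerivAt (fun x : ℝ => expRemainder (n + 1) (x * z))
        (z * expRemainder n (x * z)) x := fun x => by
      simpa [mul_comm] using ((hasDerivAt_expRemainder n _).comp (x : ℂ)
        ((hasDerivAt_id (x : ℂ)).mul_const z)).comp_ofReal
    have hB (x : ℝ) := (hasDerivAt_pow_succ_div_factorial n x).const_mul (‖z‖ ^ (n + 1))
    have := image_norm_le_of_norm_deriv_right_le_deriv_boundary (a := 0) (b := 1)
      (fun x _ => (hf x).continuousAt.continuousWithinAt) (fun x _ => (hf x).hasDerivWithinAt)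
      (by simp [expRemainder, sum_range_succ']) hB (fun x hx => ?_)
      (Set.right_mem_Icc.2 zero_le_one)
    · simpa [div_eq_mul_inv] using this
    · have hxz : (x * z : ℂ).re ≤ 0 := by simpa using mul_nonpos_of_nonneg_of_nonpos hx.1 hz
      calc ‖z * expRemainder n (x * z)‖ ≤ ‖z‖ * (‖(x : ℂ) * z‖ ^ n / n.factorial) := by
            rw [norm_mul]; exact mul_le_mul_of_nonneg_left (ih hxz) (norm_nonneg z)
        _ = ‖z‖ ^ (n + 1) * (x ^ n / n.factorial) := by
            rw [norm_mul, Complex.norm_real, Real.norm_of_nonneg hx.1]; ring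

lemma norm_expRemainder_le_one_add {z : ℂ} (hz : z.re ≤ 0) (n : ℕ) :
    ‖expRemainder n z‖ ≤ 1 + ∑ ℓ ∈ range n, ‖z‖ ^ ℓ / (Nat.factorial ℓ) := by
  refine (norm_sub_le _ _).trans (add_le_add ?_ ((norm_sum_le _ _).trans_eq ?_))
  · simpa [Complex.norm_exp] using hz
  · simp [norm_pow]

lemma norm_expRemainder_mul_rpow_le_rpow {z : ℂ} (hz : z.re ≤ 0) {x : ℝ} (hx : 0 < x)
    (hzx : ‖z‖ = x) (n : ℕ) (s : ℝ) :
    ‖expRemainder n z‖ * x ^ (-s - 1) ≤ x ^ ((n : ℝ) - s - 1) / n.factorial := by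
  have hR := norm_expRemainder_le hz n
  rw [hzx] at hR
  rw [show (n : ℝ) - s - 1 = -s - 1 + n by ring, Real.rpow_add_natCast hx.ne',
    mul_div_assoc, mul_comm]
  exact mul_le_mul_of_nonneg_left hR (Real.rpow_nonneg hx.le _)

lemma norm_expRemainder_mul_rpow_le_rpow_add_sum {z : ℂ} (hz : z.re ≤ 0) {x : ℝ} (hx : 0 < x)
    (hzx : ‖z‖ = x) (n : ℕ) (s : ℝ) :
    ‖expRemainder n z‖ * x ^ (-s - 1)
      ≤ x ^ (-s - 1) + ∑ ℓ ∈ range n, x ^ ((ℓ : ℝ) - s - 1) / ℓ.factorial := by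
  have hR := norm_expRemainder_le_one_add hz n
  rw [hzx] at hR
  have hpow (ℓ : ℕ) : x ^ ((ℓ : ℝ) - s - 1) = x ^ ℓ * x ^ (-s - 1) := by
    rw [show (ℓ : ℝ) - s - 1 = -s - 1 + ℓ by ring, Real.rpow_add_natCast hx.ne',
      mul_comm]
  calc ‖expRemainder n z‖ * x ^ (-s - 1)
      ≤ (1 + ∑ ℓ ∈ range n, x ^ ℓ / ℓ.factorial) * x ^ (-s - 1) :=
        mul_le_mul_of_nonneg_right hR (Real.rpow_nonneg hx.le _)
    _ = _ := by simp only [add_mul, one_mul, sum_mul, div_mul_eq_mul_div, hpow]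

lemma setIntegral_Ioi_le_of_norm_le {f g h : ℝ → ℝ} {a t : ℝ} (hat : a ≤ t)
    (hf : AEStronglyMeasurable f (volume.restrict (Ioi a)))
    (hg : IntegrableOn g (Ioc a t)) (hh : IntegrableOn h (Ioi t))
    (hfg : ∀ x ∈ Ioc a t, ‖f x‖ ≤ g x) (hfh : ∀ x ∈ Ioi t, ‖f x‖ ≤ h x) :
    ∫ x in Ioi a, f x ≤ (∫ x in Ioc a t, g x) + ∫ x in Ioi t, h x := by
  have hf₁ : IntegrableOn f (Ioc a t) :=
    hg.mono' (hf.mono_measure (Measure.restrict_mono Set.Ioc_subset_Ioi_self le_rfl))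
      ((ae_restrict_iff' measurableSet_Ioc).2 (.of_forall hfg))
  have hf₂ : IntegrableOn f (Ioi t) :=
    hh.mono' (hf.mono_measure (Measure.restrict_mono (Ioi_subset_Ioi hat) le_rfl))
      ((ae_restrict_iff' measurableSet_Ioi).2 (.of_forall hfh))
  rw [← Ioc_union_Ioi_eq_Ioi hat, setIntegral_union (Ioc_disjoint_Ioi le_rfl) measurableSet_Ioi
    hf₁ hf₂]
  exact add_le_add
    (setIntegral_mono_on hf₁ hg measurableSet_Ioc fun x hx =>
      (Real.le_norm_self _).trans (hfg x hx))
    (setIntegral_mono_on hf₂ hh measurableSet_Ioi fun x hx =>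
      (Real.le_norm_self _).trans (hfh x hx))

lemma integral_Ioi_comp_mul_right_mul_rpow (f : ℝ → ℝ) {a : ℝ} (ha : 0 < a) (r : ℝ) :
    ∫ x in Ioi 0, f (x * a) * x ^ (-r - 1) = a ^ r * ∫ x in Ioi 0, f x * x ^ (-r - 1) := by
  have hpow : ∀ x ∈ Ioi (0 : ℝ), f (x * a) * x ^ (-r - 1)
      = a ^ (r + 1) * (f (x * a) * (x * a) ^ (-r - 1)) := fun x hx => by
    have hcancel : a ^ (r + 1) * a ^ (-r - 1) = 1 := by rw [← Real.rpow_add ha]; norm_num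
    rw [Real.mul_rpow (le_of_lt hx) ha.le]
    linear_combination -(f (x * a) * x ^ (-r - 1)) * hcancel
  rw [setIntegral_congr_fun measurableSet_Ioi hpow, integral_const_mul,
    integral_comp_mul_right_Ioi (fun y => f y * y ^ (-r - 1)) 0 ha, zero_mul, smul_eq_mul,
    ← mul_assoc, ← Real.rpow_neg_one, ← Real.rpow_add ha]
  norm_num

lemma integral_Ioc_zero_one_rpow {a : ℝ} (ha : -1 < a) :
    ∫ x : ℝ in Ioc 0 1, x ^ a = 1 / (a + 1) := by
  rw [← intervalIntegral.integral_of_le zero_le_one, integral_rpow (.inl ha)]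
  simp [Real.zero_rpow (by linarith : a + 1 ≠ 0)]

lemma integrableOn_Ioc_zero_one_rpow {a : ℝ} (ha : -1 < a) :
    IntegrableOn (fun x : ℝ => x ^ a) (Ioc 0 1) :=
  (intervalIntegrable_iff_integrableOn_Ioc_of_le zero_le_one).1
    (intervalIntegral.intervalIntegrable_rpow' ha)

lemma integral_Ioi_one_rpow {a : ℝ} (ha : a < -1) : ∫ x in Ioi 1, x ^ a = 1 / (-a - 1) := by
  rw [integral_Ioi_rpow_of_lt ha zero_lt_one, Real.one_rpow, ← neg_add', div_neg, neg_div]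

section PowerIntegrals

variable {n : ℕ} {s : ℝ}

lemma natCast_sub_sub_one_lt_neg_one (hns : (n : ℝ) - 1 < s) {ℓ : ℕ} (hℓ : ℓ ∈ range n) :
    (ℓ : ℝ) - s - 1 < -1 := by
  have : (ℓ : ℝ) + 1 ≤ n := by exact_mod_cast mem_range.1 hℓ
  linarith

lemma integral_Ioc_zero_one_rpow_natCast_sub_div (hsn : s < n) :
    ∫ x : ℝ in Ioc 0 1, x ^ ((n : ℝ) - s - 1) / n.factorial = 1 / (n.factorial * |s - n|) := by
  rw [integral_div, integral_Ioc_zero_one_rpow (by linarith), abs_of_neg (by linarith), div_div,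
    mul_comm]
  ring

lemma integrableOn_Ioi_one_rpow_add_sum (hs : 0 < s) (hns : (n : ℝ) - 1 < s) :
    IntegrableOn
      (fun x : ℝ => x ^ (-s - 1) + ∑ ℓ ∈ range n, x ^ ((ℓ : ℝ) - s - 1) / ℓ.factorial) (Ioi 1) :=
  (integrableOn_Ioi_rpow_of_lt (by linarith) zero_lt_one).add <| integrable_finsetSum _
    fun _ hℓ => (integrableOn_Ioi_rpow_of_lt (natCast_sub_sub_one_lt_neg_one hns hℓ)
      zero_lt_one).div_const _

lemma integral_Ioi_one_rpow_add_sum (hs : 0 < s) (hns : (n : ℝ) - 1 < s) :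
    ∫ x : ℝ in Ioi 1, (x ^ (-s - 1) + ∑ ℓ ∈ range n, x ^ ((ℓ : ℝ) - s - 1) / ℓ.factorial)
      = 1 / s + ∑ ℓ ∈ range n, 1 / (ℓ.factorial * |s - ℓ|) := by
  have hterm : ∀ ℓ ∈ range n,
      IntegrableOn (fun x : ℝ => x ^ ((ℓ : ℝ) - s - 1) / ℓ.factorial) (Ioi 1) := fun _ hℓ =>
    (integrableOn_Ioi_rpow_of_lt (natCast_sub_sub_one_lt_neg_one hns hℓ) zero_lt_one).div_const _
  rw [integral_add (integrableOn_Ioi_rpow_of_lt (by linarith) zero_lt_one)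
    (integrable_finsetSum _ hterm), integral_finsetSum _ hterm,
    integral_Ioi_one_rpow (by linarith)]
  congr 1
  · ring
  · refine sum_congr rfl fun ℓ hℓ => ?_
    have := natCast_sub_sub_one_lt_neg_one hns hℓ
    rw [integral_div, integral_Ioi_one_rpow this, abs_of_pos (by linarith), div_div, mul_comm]
    ring

end PowerIntegrals

lemma sum_range_one_div_factorial_mul_abs_le {s m : ℝ} (hm : 0 < m) (N : ℕ)
    (h : ∀ ℓ ∈ range N, m ≤ |s - ℓ|) :
    ∑ ℓ ∈ range N, 1 / (ℓ.factorial * |s - ℓ|) ≤ Real.exp 1 / m := by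
  calc ∑ ℓ ∈ range N, 1 / (ℓ.factorial * |s - ℓ|) ≤ ∑ ℓ ∈ range N, 1 ^ ℓ / ℓ.factorial / m := by
        refine sum_le_sum fun ℓ hℓ => ?_
        rw [one_pow, div_div]
        gcongr
        exact h ℓ hℓ
    _ ≤ Real.exp 1 / m := by
        rw [← sum_div]
        gcongr
        exact Real.sum_le_exp_of_nonneg zero_le_one N

lemma min_le_abs_add_sub_natCast {S ℓ : ℕ} {σ : ℝ} (hσ : σ ∈ Set.Ioo 0 1) (hℓ : ℓ ≤ S + 1) :
    min σ (1 - σ) ≤ |S + σ - ℓ| := by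
  obtain ⟨hσ0, hσ1⟩ := hσ
  rcases hℓ.lt_or_eq with hℓS | rfl
  · have : (ℓ : ℝ) ≤ S := by exact_mod_cast Nat.lt_succ_iff.1 hℓS
    rw [abs_of_pos (by linarith)]
    exact (min_le_left _ _).trans (by linarith)
  · rw [abs_of_neg (by push_cast; linarith)]
    push_cast
    exact (min_le_right _ _).trans (by linarith)

lemma integral_norm_expRemainder_neg_mul_rpow_le_of_norm_eq_one {u : ℂ} (hu : ‖u‖ = 1)
    (hre : 0 ≤ u.re) {n : ℕ} {s : ℝ} (hs : 0 < s) (hns : (n : ℝ) - 1 < s) (hsn : s < n) :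
    ∫ x : ℝ in Ioi 0, ‖expRemainder n (-x * u)‖ * x ^ (-s - 1)
      ≤ ∑ ℓ ∈ range (n + 1), 1 / (ℓ.factorial * |s - ℓ|) + 1 / s := by
  have hre_mul {x : ℝ} (hx : 0 < x) : (-(x : ℂ) * u).re ≤ 0 := by
    simpa using mul_nonneg hx.le hre
  have hnorm_mul {x : ℝ} (hx : 0 < x) : ‖-(x : ℂ) * u‖ = x := by
    simp [hu, hx.le]
  have hnorm_eq {x : ℝ} (hx : 0 < x) :
      ‖‖expRemainder n (-x * u)‖ * x ^ (-s - 1)‖ = ‖expRemainder n (-x * u)‖ * x ^ (-s - 1) :=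
    Real.norm_of_nonneg (mul_nonneg (norm_nonneg _) (Real.rpow_nonneg hx.le _))
  calc ∫ x : ℝ in Ioi 0, ‖expRemainder n (-x * u)‖ * x ^ (-s - 1)
      ≤ (∫ x : ℝ in Ioc 0 1, x ^ ((n : ℝ) - s - 1) / n.factorial)
        + ∫ x : ℝ in Ioi 1, (x ^ (-s - 1) + ∑ ℓ ∈ range n, x ^ ((ℓ : ℝ) - s - 1) / ℓ.factorial) :=
        setIntegral_Ioi_le_of_norm_le zero_le_one (by fun_prop)
          ((integrableOn_Ioc_zero_one_rpow (by linarith)).div_const _)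
          (integrableOn_Ioi_one_rpow_add_sum hs hns)
          (fun x hx => (hnorm_eq hx.1).trans_le <|
            norm_expRemainder_mul_rpow_le_rpow (hre_mul hx.1) hx.1 (hnorm_mul hx.1) n s)
          (fun x hx => (hnorm_eq (one_pos.trans hx)).trans_le <|
            norm_expRemainder_mul_rpow_le_rpow_add_sum (hre_mul (one_pos.trans hx))
              (one_pos.trans hx) (hnorm_mul (one_pos.trans hx)) n s)
    _ = ∑ ℓ ∈ range (n + 1), 1 / (ℓ.factorial * |s - ℓ|) + 1 / s := by
        rw [integral_Ioc_zero_one_rpow_natCast_sub_div hsn, integral_Ioi_one_rpow_add_sum hs hns,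
          sum_range_succ]
        ring

lemma integral_norm_expRemainder_neg_mul_rpow_le {w : ℂ} (hw : 0 ≤ w.re) {n : ℕ} {s : ℝ}
    (hs : 0 < s) (hns : (n : ℝ) - 1 < s) (hsn : s < n) :
    ∫ x : ℝ in Ioi 0, ‖expRemainder n (-x * w)‖ * x ^ (-s - 1)
      ≤ (∑ ℓ ∈ range (n + 1), 1 / (ℓ.factorial * |s - ℓ|) + 1 / s) * ‖w‖ ^ s := by
  rcases eq_or_ne w 0 with rfl | hw0
  · obtain ⟨m, rfl⟩ : ∃ m, n = m + 1 := Nat.exists_eq_add_one.2 (by exact_mod_cast hs.trans hsn)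
    simp [expRemainder, Real.zero_rpow hs.ne', sum_range_succ']
  have hW : 0 < ‖w‖ := norm_pos_iff.2 hw0
  have hWc : (‖w‖ : ℂ) ≠ 0 := by exact_mod_cast hW.ne'
  have hu : ‖w / ‖w‖‖ = 1 := by simp [hW.ne']
  have hre : 0 ≤ (w / ‖w‖).re := by
    rw [Complex.div_ofReal_re]; exact div_nonneg hw hW.le
  have hrescale (x : ℝ) : -(x : ℂ) * w = -((x * ‖w‖ : ℝ) : ℂ) * (w / ‖w‖) := by
    push_cast; field_simp
  simp_rw [hrescale]
  rw [integral_Ioi_comp_mul_right_mul_rpow (fun y => ‖expRemainder n (-y * (w / ‖w‖))‖) hW s,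
    mul_comm]
  gcongr
  exact integral_norm_expRemainder_neg_mul_rpow_le_of_norm_eq_one hu hre hs hns hsn

/-- Let `s > 0` be noninteger, `s = S + σ` with `S ∈ ℕ ∪ {0}`, `σ ∈ (0,1)`.
With `C(s) = e / min(σ, 1−σ) + 1/s`, for every `w ∈ ℂ` with `Re w ≥ 0`,
`∫₀^∞ |(∑_{ℓ=0}^S (−λw)^ℓ/ℓ!) − e^{−λw}| λ^{−(S+1+σ)} dλ ≤ C(s) |w|^s`. -/
theorem stmt18 (s : ℝ) (hs : 0 < s) (S : ℕ) (σ : ℝ) (hσ : σ ∈ Set.Ioo (0 : ℝ) 1)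
    (hssum : s = (S : ℝ) + σ) (w : ℂ) (hw : 0 ≤ w.re) :
    ∫ l in Set.Ioi (0 : ℝ),
        ‖(∑ ℓ ∈ Finset.range (S + 1), (-(l : ℂ) * w) ^ ℓ / (Nat.factorial ℓ : ℂ))
          - Complex.exp (-(l : ℂ) * w)‖ * l ^ (-((S : ℝ) + 1 + σ))
      ≤ (Real.exp 1 / min σ (1 - σ) + 1 / s) * ‖w‖ ^ s := by
  obtain ⟨hσ0, hσ1⟩ := hσ
  have hexponent : -((S : ℝ) + 1 + σ) = -s - 1 := by rw [hssum]; ring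
  simp_rw [hexponent, norm_sub_rev _ (Complex.exp _)]
  calc _ ≤ (∑ ℓ ∈ range (S + 1 + 1), 1 / (ℓ.factorial * |s - ℓ|) + 1 / s) * ‖w‖ ^ s :=
        integral_norm_expRemainder_neg_mul_rpow_le hw hs (by push_cast; linarith)
          (by push_cast; linarith)
    _ ≤ (Real.exp 1 / min σ (1 - σ) + 1 / s) * ‖w‖ ^ s := by
        gcongr
        refine sum_range_one_div_factorial_mul_abs_le (lt_min hσ0 (by linarith)) _
          fun ℓ hℓ => ?_
        rw [hssum]
        exact min_le_abs_add_sub_natCast ⟨hσ0, hσ1⟩ (mem_range_succ_iff.1 hℓ)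
end
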